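/- arXiv:1601.04802 — 8 statements merged into one kernel-verified Lean document; each statement's English description precedes it below -/
import Mathlib

section
/- (Motzkin's transposition theorem.) Let A ∈ ℝ^{r×n} and B ∈ ℝ^{s×n} be real matrices and let α ∈ ℝ^r and β ∈ ℝ^s be column vectors. Then there exists a vector x ∈ ℝⁿ with Ax ≥ α (componentwise) and Bx > β (componentwise) if and only if for all row vectors y ∈ ℝ^r and z ∈ ℝ^s with y ≥ 0 and z ≥ 0: (i) if yA + zB = 0 then yα + zβ ≤ 0, and (ii) if yA + zB = 0 and z ≠ 0 then yα + zβ < 0. -/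
/-!
Adding a coordinate `t` for the right-hand sides homogenizes the system to
`[A | -α] x' ≥ 0`, `[B | -β; 0 | 1] x' > 0`, and conditions (i), (ii) say precisely that every
nonnegative combination of the rows of the augmented matrices which vanishes puts zero weight on the
strict rows. Then, for each strict row, Farkas' lemma gives a solution of the non-strict system
that is strict in that row, and the sum of these solutions solves the homogeneous system;
dividing by `t > 0` solves the original one.

Farkas' lemma is hyperplane separation from the cone spanned by finitely many vectors. That cone
is closed: it is the union of the cones spanned by linearly independent subfamilies
(Carathéodory), each the image of a closed orthant under a closed embedding.
-/

open Matrix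

theorem Fintype.linearCombination_subtype_ne {R M ι : Type*} [Semiring R] [AddCommMonoid M]
    [Module R M] [Fintype ι] [DecidableEq ι] {v : ι → M} {j : ι} {c : ι → R} (hc : c j = 0) :
    Fintype.linearCombination R (v ∘ Subtype.val : {i // i ≠ j} → M) (fun i => c i) =
      Fintype.linearCombination R v c := by
  simp only [Fintype.linearCombination_apply, Function.comp_apply]
  rw [← Finset.sum_subtype (Finset.univ.erase j) (by simp) (fun i => c i • v i),
    Finset.sum_erase _ (by simp [hc])]

section Caratheodory

variable {𝕜 E ι : Type*} [Field 𝕜] [LinearOrder 𝕜] [IsStrictOrderedRing 𝕜]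
  [AddCommGroup E] [Module 𝕜 E] [Fintype ι]

theorem exists_nonneg_sub_smul_apply_eq_zero {c g : ι → 𝕜} (hc : 0 ≤ c) (hg : ∃ j, 0 < g j) :
    ∃ t : 𝕜, ∃ j, 0 ≤ c - t • g ∧ (c - t • g) j = 0 := by
  classical
  obtain ⟨j, hj, hmin⟩ := Finset.exists_min_image {i | 0 < g i} (fun i => c i / g i)
    (by simpa [Finset.Nonempty] using hg)
  simp only [Finset.mem_filter, Finset.mem_univ, true_and] at hj hmin
  refine ⟨c j / g j, j, fun i => ?_, by simp [hj.ne']⟩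
  simp only [Pi.zero_apply, Pi.sub_apply, Pi.smul_apply, smul_eq_mul, sub_nonneg]
  rcases le_or_gt (g i) 0 with hi | hi
  · exact (mul_nonpos_of_nonneg_of_nonpos (div_nonneg (hc j) hj.le) hi).trans (hc i)
  · exact (le_div_iff₀ hi).mp (hmin i hi)

theorem image_linearCombination_Ici_zero_eq_iUnion [DecidableEq ι] {v : ι → E}
    (hv : ¬LinearIndependent 𝕜 v) :
    Fintype.linearCombination 𝕜 v '' Set.Ici 0 =
      ⋃ j, Fintype.linearCombination 𝕜 (v ∘ Subtype.val : {i // i ≠ j} → E) '' Set.Ici 0 := by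
  refine subset_antisymm ?_ (Set.iUnion_subset fun j => ?_)
  · rintro _ ⟨c, hc, rfl⟩
    obtain ⟨g, hg, hpos⟩ : ∃ g, Fintype.linearCombination 𝕜 v g = 0 ∧ ∃ j, 0 < g j := by
      obtain ⟨g, hg, j, hj⟩ := Fintype.not_linearIndependent_iff.mp hv
      rcases hj.lt_or_gt with hj | hj
      · exact ⟨-g, by simp [Fintype.linearCombination_apply, hg], j, by simpa using hj⟩
      · exact ⟨g, hg, j, hj⟩
    obtain ⟨t, j, hnonneg, hj⟩ := exists_nonneg_sub_smul_apply_eq_zero hc hpos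
    refine Set.mem_iUnion.mpr ⟨j, fun i => (c - t • g) i, fun i => hnonneg i, ?_⟩
    rw [Fintype.linearCombination_subtype_ne hj, map_sub, map_smul, hg, smul_zero, sub_zero]
  · rintro _ ⟨c, hc, rfl⟩
    let c' : ι → 𝕜 := fun i => if h : i = j then 0 else c ⟨i, h⟩
    refine ⟨c', fun i => ?_, ?_⟩
    · by_cases h : i = j
      · simp [c', h]
      · simpa [c', h] using hc ⟨i, h⟩
    · rw [← Fintype.linearCombination_subtype_ne (v := v) (j := j) (by simp [c'])]
      congr 1
      ext ⟨i, hi⟩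
      simp [c', hi]

end Caratheodory

section Farkas

variable {E : Type*} [AddCommGroup E] [TopologicalSpace E] [IsTopologicalAddGroup E]
  [Module ℝ E] [ContinuousSMul ℝ E] [T2Space E]

theorem isClosed_image_linearCombination_Ici_zero {ι : Type*} [Fintype ι] (v : ι → E) :
    IsClosed (Fintype.linearCombination ℝ v '' Set.Ici 0) := by
  classical
  induction h : Fintype.card ι using Nat.strong_induction_on generalizing ι with
  | _ m ih =>
  by_cases hv : LinearIndependent ℝ v
  · exact (LinearMap.isClosedEmbedding_of_injective (LinearMap.ker_eq_bot.mpr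
      hv.fintypeLinearCombination_injective)).isClosedMap _ isClosed_Ici
  · rw [image_linearCombination_Ici_zero_eq_iUnion hv]
    exact isClosed_iUnion_of_finite fun j =>
      ih _ (h ▸ Fintype.card_subtype_lt (p := (· ≠ j)) (not_not.mpr rfl)) _ rfl

theorem mem_image_linearCombination_Ici_zero_of_forall_strongDual [LocallyConvexSpace ℝ E]
    {ι : Type*} [Fintype ι] (v : ι → E) {d : E}
    (h : ∀ f : StrongDual ℝ E, (∀ i, 0 ≤ f (v i)) → 0 ≤ f d) :
    d ∈ Fintype.linearCombination ℝ v '' Set.Ici 0 := by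
  classical
  let C : ProperCone ℝ E :=
    ⟨(PointedCone.positive ℝ (ι → ℝ)).map (Fintype.linearCombination ℝ v),
      by simpa [PointedCone.coe_map] using isClosed_image_linearCombination_Ici_zero v⟩
  by_contra hd
  obtain ⟨f, hfC, hfd⟩ := C.hyperplane_separation_point (x₀ := d) (by simpa [C] using hd)
  refine hfd.not_ge (h f fun i => hfC _ ?_)
  exact PointedCone.mem_map.mpr ⟨Pi.single i 1, by simp [PointedCone.mem_positive], by simp⟩

end Farkas

namespace Matrix

section Real

variable {m k n : Type*} [Fintype m] [Fintype k] [Fintype n]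

theorem exists_nonneg_vecMul_eq_of_forall_mulVec_nonneg (M : Matrix m n ℝ) {d : n → ℝ}
    (h : ∀ x, 0 ≤ M *ᵥ x → 0 ≤ d ⬝ᵥ x) : ∃ y, 0 ≤ y ∧ y ᵥ* M = d := by
  classical
  obtain ⟨y, hy, hyd⟩ := mem_image_linearCombination_Ici_zero_of_forall_strongDual M fun f hf => by
    set w := (dotProductEquiv ℝ n).symm (f : Module.Dual ℝ (n → ℝ))
    have hw (u : n → ℝ) : f u = u ⬝ᵥ w := by
      rw [dotProduct_comm]
      exact (LinearMap.congr_fun ((dotProductEquiv ℝ n).apply_symm_apply _) u).symm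
    rw [hw]
    exact h w fun i => (hf i).trans_eq (hw (M i))
  exact ⟨y, hy, by rw [vecMul_eq_sum, ← hyd]; rfl⟩

theorem exists_mulVec_nonneg_and_pos_apply (A : Matrix m n ℝ) (B : Matrix k n ℝ)
    (h : ∀ y z, 0 ≤ y → 0 ≤ z → y ᵥ* A + z ᵥ* B = 0 → z = 0) (j : k) :
    ∃ x, 0 ≤ A *ᵥ x ∧ 0 ≤ B *ᵥ x ∧ 0 < (B *ᵥ x) j := by
  classical
  -- Otherwise Farkas writes `-B j` as a nonnegative combination of the rows of `A` and `B`,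
  -- which yields a vanishing combination with weight at least `1` on row `j` of `B`.
  by_contra! hcon
  obtain ⟨w, hw, hwB⟩ := exists_nonneg_vecMul_eq_of_forall_mulVec_nonneg (fromRows A B) (d := -B j)
    fun x hx => by
      rw [neg_dotProduct, neg_nonneg]
      exact hcon x (fun i => hx (.inl i)) (fun i => hx (.inr i))
  rw [vecMul_fromRows] at hwB
  have hz := h (w ∘ Sum.inl) (w ∘ Sum.inr + Pi.single j 1) (fun i => hw _)
    (add_nonneg (fun i => hw _) (Pi.single_nonneg.mpr zero_le_one)) (by
      rw [add_vecMul, single_one_vecMul, ← add_assoc, hwB]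
      simp [row])
  have hzj := congr_fun hz j
  simp only [Pi.add_apply, Function.comp_apply, Pi.single_eq_same, Pi.zero_apply] at hzj
  linarith [show 0 ≤ w (.inr j) from hw _]

theorem exists_mulVec_nonneg_and_pos (A : Matrix m n ℝ) (B : Matrix k n ℝ)
    (h : ∀ y z, 0 ≤ y → 0 ≤ z → y ᵥ* A + z ᵥ* B = 0 → z = 0) :
    ∃ x, 0 ≤ A *ᵥ x ∧ ∀ j, 0 < (B *ᵥ x) j := by
  choose x hxA hxB hxj using exists_mulVec_nonneg_and_pos_apply A B h
  refine ⟨∑ j, x j, ?_, fun j => ?_⟩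
  · rw [mulVec_sum]
    exact Finset.sum_nonneg fun j _ => hxA j
  · rw [mulVec_sum, Finset.sum_apply]
    exact Finset.sum_pos' (fun i _ => hxB i j) ⟨j, Finset.mem_univ j, hxj j⟩

end Real

theorem dotProduct_lt_dotProduct_of_nonneg_of_ne_zero {R n : Type*} [Semiring R] [PartialOrder R]
    [IsStrictOrderedRing R] [Fintype n] {u v w : n → R} (huv : ∀ i, u i < v i) (hw : 0 ≤ w)
    (hw0 : w ≠ 0) : w ⬝ᵥ u < w ⬝ᵥ v := by
  obtain ⟨j, hj⟩ := Function.ne_iff.mp hw0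
  exact Finset.sum_lt_sum (fun i _ => mul_le_mul_of_nonneg_left (huv i).le (hw i))
    ⟨j, Finset.mem_univ j, mul_lt_mul_of_pos_left (huv j) ((hw j).lt_of_ne' hj)⟩

theorem replicateCol_unit_mulVec {R m : Type*} [CommSemiring R] (w : m → R)
    (v : Unit → R) : replicateCol Unit w *ᵥ v = v () • w := by
  ext i
  simp [mulVec, dotProduct, mul_comm]

section Homogenization

variable {𝕜 m k n : Type*} [Field 𝕜] [LinearOrder 𝕜] [IsStrictOrderedRing 𝕜]
  {A : Matrix m n 𝕜} {B : Matrix k n 𝕜} {α : m → 𝕜} {β : k → 𝕜}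

theorem forall_homogenized_eq_zero [Fintype m] [Fintype k]
    (h : ∀ y z, 0 ≤ y → 0 ≤ z →
      (y ᵥ* A + z ᵥ* B = 0 → y ⬝ᵥ α + z ⬝ᵥ β ≤ 0) ∧
      (y ᵥ* A + z ᵥ* B = 0 → z ≠ 0 → y ⬝ᵥ α + z ⬝ᵥ β < 0))
    (y : m → 𝕜) (z : k ⊕ Unit → 𝕜) (hy : 0 ≤ y) (hz : 0 ≤ z)
    (hyz : y ᵥ* fromCols A (replicateCol Unit (-α)) +
      z ᵥ* fromBlocks B (replicateCol Unit (-β)) 0 1 = 0) : z = 0 := by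
  have hAB : y ᵥ* A + (z ∘ Sum.inl) ᵥ* B = 0 := funext fun i => by
    simpa [vecMul_fromBlocks] using congr_fun hyz (.inl i)
  have hw : z (.inr ()) = y ⬝ᵥ α + (z ∘ Sum.inl) ⬝ᵥ β := by
    have := congr_fun hyz (.inr ())
    simp only [vecMul_fromCols, mulVec_replicateCol_eq_const, dotProduct_neg, vecMul_fromBlocks,
      vecMul_zero, add_zero, vecMul_one, Pi.add_apply, Sum.elim_inr, Function.const_apply,
      Function.comp_apply, Pi.zero_apply] at this
    linarith
  obtain ⟨hle, hlt⟩ := h y (z ∘ Sum.inl) hy (fun i => hz _)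
  have hw0 : z (.inr ()) = 0 := le_antisymm (hw ▸ hle hAB) (hz _)
  have hz0 : z ∘ Sum.inl = 0 := by
    by_contra hne
    exact (hlt hAB hne).ne (hw ▸ hw0)
  ext (i | ⟨⟩)
  · exact congr_fun hz0 i
  · exact hw0

theorem exists_le_mulVec_lt_mulVec_of_homogenized [Fintype n] {x : n ⊕ Unit → 𝕜}
    (hA : 0 ≤ fromCols A (replicateCol Unit (-α)) *ᵥ x)
    (hB : ∀ j, 0 < (fromBlocks B (replicateCol Unit (-β)) 0 (1 : Matrix Unit Unit 𝕜) *ᵥ x) j) :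
    ∃ x, (∀ i, α i ≤ (A *ᵥ x) i) ∧ ∀ j, β j < (B *ᵥ x) j := by
  rw [← Sum.elim_comp_inl_inr x] at hA hB
  simp only [fromCols_mulVec_sumElim, fromBlocks_mulVec, replicateCol_unit_mulVec] at hA hB
  set t := x (.inr ())
  have ht : 0 < t := by simpa using hB (.inr ())
  refine ⟨t⁻¹ • (x ∘ Sum.inl), fun i => ?_, fun j => ?_⟩
  · have hAi := hA i
    simp only [Pi.zero_apply, Function.comp_apply, smul_neg, Pi.add_apply, Pi.neg_apply,
      Pi.smul_apply, smul_eq_mul] at hAi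
    rw [mulVec_smul, Pi.smul_apply, smul_eq_mul, le_inv_mul_iff₀ ht]
    linarith
  · have hBj := hB (.inl j)
    simp only [Sum.elim_comp_inl_inr, Function.comp_apply, smul_neg, zero_mulVec, one_mulVec,
      zero_add, Sum.elim_inl, Pi.add_apply, Pi.neg_apply, Pi.smul_apply, smul_eq_mul] at hBj
    rw [mulVec_smul, Pi.smul_apply, smul_eq_mul, lt_inv_mul_iff₀ ht]
    linarith

end Homogenization

end Matrix

/-- **Motzkin's transposition theorem.** There exists `x` with `A *ᵥ x ≥ α`
(componentwise) and `B *ᵥ x > β` (componentwise) iff for all nonnegative row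
vectors `y, z`: (i) `y A + z B = 0 → y⬝α + z⬝β ≤ 0`, and
(ii) `y A + z B = 0 ∧ z ≠ 0 → y⬝α + z⬝β < 0`. -/
theorem motzkin_transposition (r s n : ℕ)
    (A : Matrix (Fin r) (Fin n) ℝ) (B : Matrix (Fin s) (Fin n) ℝ)
    (α : Fin r → ℝ) (β : Fin s → ℝ) :
    (∃ x : Fin n → ℝ, (∀ i, α i ≤ A.mulVec x i) ∧ (∀ j, β j < B.mulVec x j)) ↔
      (∀ y : Fin r → ℝ, ∀ z : Fin s → ℝ, (∀ i, 0 ≤ y i) → (∀ j, 0 ≤ z j) →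
        ((Matrix.vecMul y A + Matrix.vecMul z B = 0 → y ⬝ᵥ α + z ⬝ᵥ β ≤ 0) ∧
         (Matrix.vecMul y A + Matrix.vecMul z B = 0 → z ≠ 0 → y ⬝ᵥ α + z ⬝ᵥ β < 0))) := by
  constructor
  · rintro ⟨x, hA, hB⟩ y z hy hz
    have hα : y ⬝ᵥ α ≤ y ⬝ᵥ (A *ᵥ x) := dotProduct_le_dotProduct_of_nonneg_left hA hy
    have hβ : z ⬝ᵥ β ≤ z ⬝ᵥ (B *ᵥ x) :=
      dotProduct_le_dotProduct_of_nonneg_left (fun j => (hB j).le) hz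
    have hcancel (hyz : y ᵥ* A + z ᵥ* B = 0) : y ⬝ᵥ (A *ᵥ x) + z ⬝ᵥ (B *ᵥ x) = 0 := by
      rw [dotProduct_mulVec, dotProduct_mulVec, ← add_dotProduct, hyz, zero_dotProduct]
    refine ⟨fun hyz => by linarith [hcancel hyz], fun hyz hz0 => ?_⟩
    linarith [hcancel hyz, dotProduct_lt_dotProduct_of_nonneg_of_ne_zero hB hz hz0]
  · intro h
    obtain ⟨x, hA, hB⟩ := exists_mulVec_nonneg_and_pos _ _ (forall_homogenized_eq_zero h)
    exact exists_le_mulVec_lt_mulVec_of_homogenized hA hB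
end

section
/- Let A ∈ ℝ^{r×n} and B ∈ ℝ^{s×n} be matrices with rows A₁,…,A_r and B₁,…,B_s, and let α ∈ ℝ^r, β ∈ ℝ^s be column vectors. Then there is no vector x ∈ ℝⁿ with Ax ≥ α and Bx > β (componentwise) if and only if there exist real numbers λ₁,…,λ_r ≥ 0 and η₀,η₁,…,η_s ≥ 0 such that Σ_{i=1}^r λ_i (A_i x − α_i) + Σ_{j=1}^s η_j (B_j x − β_j) + η₀ is identically zero as a function of x ∈ ℝⁿ, and Σ_{j=0}^s η_j > 0. -/
/-!
Fourier–Motzkin elimination proves the affine Farkas lemma: if `c ≤ a x` has no solution, some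
`y ≥ 0` has `yᵀ a = 0` and `yᵀ c > 0`. Eliminating the first variable replaces the rows of `a` by
nonnegative combinations of them; the reduced system is again unsolvable, and a certificate `y'`
for it pulls back to the certificate `y'ᵀ W` for the original one, `W` being the matrix of
combination weights.

The strict inequalities are removed by homogenizing: in the unknowns `(t, x)` the system
`A x ≥ t α`, `B x ≥ t β + 1`, `t ≥ 1` is solvable iff `A x ≥ α`, `B x > β` is. A Farkas
certificate of the homogenized system is exactly the family of multipliers `λ, η, η₀`, the row
`t ≥ 1` carrying `η₀`. Conversely, evaluating the identity at a solution `x` gives a positive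
left-hand side.
-/

open Matrix

theorem exists_between_of_forall_le_of_finite {α : Type*} [ConditionallyCompleteLattice α]
    [Nonempty α] {s t : Set α} (hs : s.Finite) (ht : t.Finite)
    (hst : ∀ x ∈ s, ∀ y ∈ t, x ≤ y) : (upperBounds s ∩ lowerBounds t).Nonempty := by
  rcases s.eq_empty_or_nonempty with rfl | hs'
  · obtain ⟨m, hm⟩ := ht.bddBelow
    exact ⟨m, by simp, hm⟩
  rcases t.eq_empty_or_nonempty with rfl | ht'
  · obtain ⟨m, hm⟩ := hs.bddAbove
    exact ⟨m, hm, by simp⟩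
  exact exists_between_of_forall_le hs' ht' hst

theorem exists_forall_le_mul {ι : Type*} [Finite ι] {b r : ι → ℝ}
    (hzero : ∀ i, b i = 0 → r i ≤ 0) (hpair : ∀ p q, 0 < b p → b q < 0 → b p * r q ≤ b q * r p) :
    ∃ t, ∀ i, r i ≤ b i * t := by
  -- `t` must lie above each `r p / b p` with `b p > 0` and below each `r q / b q` with `b q < 0`
  obtain ⟨t, hlow, hup⟩ := exists_between_of_forall_le_of_finite
    (Set.finite_range fun p : {p // 0 < b p} => r p / b p)
    (Set.finite_range fun q : {q // b q < 0} => r q / b q) (by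
      rintro _ ⟨⟨p, hp⟩, rfl⟩ _ ⟨⟨q, hq⟩, rfl⟩
      rw [div_le_iff₀ hp, div_mul_eq_mul_div, le_div_iff_of_neg hq]
      linarith [hpair p q hp hq])
  refine ⟨t, fun i => ?_⟩
  rcases lt_trichotomy (b i) 0 with hi | hi | hi
  · have := hup ⟨⟨i, hi⟩, rfl⟩
    rwa [le_div_iff_of_neg hi, mul_comm] at this
  · simpa [hi] using hzero i hi
  · have := hlow ⟨⟨i, hi⟩, rfl⟩
    rwa [div_le_iff₀ hi, mul_comm] at this

theorem Matrix.mulVec_vecCons_apply {m R : Type*} [NonUnitalNonAssocSemiring R] {n : ℕ}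
    (M : Matrix m (Fin (n + 1)) R) (t : R) (z : Fin n → R) (i : m) :
    (M *ᵥ vecCons t z) i = M i 0 * t + (M.submatrix id Fin.succ *ᵥ z) i :=
  dotProduct_cons _ _ _

def Matrix.IsFarkasCertificate {ι κ : Type*} [Fintype ι] (a : Matrix ι κ ℝ) (c y : ι → ℝ) :
    Prop :=
  0 ≤ y ∧ y ᵥ* a = 0 ∧ 0 < y ⬝ᵥ c

namespace FourierMotzkin

variable {ι : Type*} {n : ℕ} (a : Matrix ι (Fin (n + 1)) ℝ)

abbrev Row : Type _ := {i // a i 0 = 0} ⊕ ({i // 0 < a i 0} × {i // a i 0 < 0})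

variable [DecidableEq ι]

/-- Rows with `a i 0 = 0` are kept; a pair `p, q` of rows with `a p 0 > 0 > a q 0` is combined
with the positive weights `-a q 0` and `a p 0`, which cancel the first column. -/
def weights : Matrix (Row a) ι ℝ :=
  of <| Sum.elim (fun i => Pi.single i.1 1)
    fun pq => (-a pq.2 0) • Pi.single pq.1.1 1 + a pq.1 0 • Pi.single pq.2.1 1

theorem weights_nonneg (k : Row a) (i : ι) : 0 ≤ weights a k i := by
  rcases k with j | ⟨⟨p, hp⟩, ⟨q, hq⟩⟩
  · simp only [weights, of_apply, Sum.elim_inl, Pi.single_apply]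
    split_ifs <;> norm_num
  · simp only [weights, of_apply, Sum.elim_inr, Pi.add_apply, Pi.smul_apply, Pi.single_apply,
      smul_eq_mul]
    split_ifs <;> nlinarith

variable [Fintype ι]

@[simp]
theorem weights_mulVec_inl (v : ι → ℝ) (i : {i // a i 0 = 0}) :
    (weights a *ᵥ v) (.inl i) = v i := by
  simp [weights, mulVec]

@[simp]
theorem weights_mulVec_inr (v : ι → ℝ) (p : {i // 0 < a i 0}) (q : {i // a i 0 < 0}) :
    (weights a *ᵥ v) (.inr (p, q)) = -a q 0 * v p + a p 0 * v q := by
  simp only [mulVec, weights, of_apply, Sum.elim_inr, add_dotProduct, smul_dotProduct,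
    single_one_dotProduct, smul_eq_mul]

theorem weights_mul_apply_zero (k : Row a) : (weights a * a) k 0 = 0 := by
  change (weights a *ᵥ fun i => a i 0) k = 0
  rcases k with i | ⟨p, q⟩
  · simpa using i.2
  · simp only [weights_mulVec_inr]
    ring

def reduce : Matrix (Row a) (Fin n) ℝ := weights a * a.submatrix id Fin.succ

theorem exists_le_mulVec_of_le_reduce_mulVec {c : ι → ℝ} {z : Fin n → ℝ}
    (hz : weights a *ᵥ c ≤ reduce a *ᵥ z) : ∃ x, c ≤ a *ᵥ x := by
  rw [reduce, ← mulVec_mulVec] at hz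
  set u := a.submatrix id Fin.succ *ᵥ z
  obtain ⟨t, ht⟩ := exists_forall_le_mul (b := fun i => a i 0) (r := fun i => c i - u i)
    (fun i hi => by simpa using hz (.inl ⟨i, hi⟩))
    (fun p q hp hq => by
      have := hz (.inr (⟨p, hp⟩, ⟨q, hq⟩))
      simp only [weights_mulVec_inr] at this
      linarith)
  refine ⟨vecCons t z, fun i => ?_⟩
  rw [mulVec_vecCons_apply]
  linarith [ht i]

theorem isFarkasCertificate_vecMul_weights {y : Row a → ℝ} {c : ι → ℝ}
    (hy : (reduce a).IsFarkasCertificate (weights a *ᵥ c) y) :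
    a.IsFarkasCertificate c (y ᵥ* weights a) := by
  obtain ⟨hy0, hy, hc⟩ := hy
  refine ⟨fun i => Finset.sum_nonneg fun k _ => mul_nonneg (hy0 k) (weights_nonneg a k i),
    ?_, by rwa [← dotProduct_mulVec]⟩
  rw [vecMul_vecMul]
  funext j
  refine Fin.cases ?_ (fun j => congrFun hy j) j
  simp [vecMul, dotProduct, weights_mul_apply_zero]

end FourierMotzkin

theorem Matrix.exists_isFarkasCertificate_of_not_exists_le_mulVec {ι : Type*} [Fintype ι]
    {n : ℕ} (a : Matrix ι (Fin n) ℝ) (c : ι → ℝ) (h : ¬ ∃ x, c ≤ a *ᵥ x) :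
    ∃ y, a.IsFarkasCertificate c y := by
  classical
  induction n generalizing ι with
  | zero =>
    obtain ⟨i, hi⟩ : ∃ i, 0 < c i := by
      simpa [Pi.le_def] using fun hc => h ⟨0, hc⟩
    exact ⟨Pi.single i 1, Pi.single_nonneg.2 zero_le_one, Subsingleton.elim _ _,
      by rwa [single_one_dotProduct]⟩
  | succ n ih =>
    obtain ⟨y, hy⟩ := ih (FourierMotzkin.reduce a) (FourierMotzkin.weights a *ᵥ c)
      fun ⟨_, hz⟩ => h (FourierMotzkin.exists_le_mulVec_of_le_reduce_mulVec a hz)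
    exact ⟨_, FourierMotzkin.isFarkasCertificate_vecMul_weights a hy⟩

namespace Motzkin

variable {ι κ : Type*} {n : ℕ}
  (A : Matrix ι (Fin n) ℝ) (B : Matrix κ (Fin n) ℝ) (α : ι → ℝ) (β : κ → ℝ)

def homogenization : Matrix (Option (ι ⊕ κ)) (Fin (n + 1)) ℝ :=
  of fun k => k.elim (vecCons 1 0)
    (Sum.elim (fun i => vecCons (-α i) (A i)) fun j => vecCons (-β j) (B j))

def homogenizationBound : Option (ι ⊕ κ) → ℝ := fun k => k.elim 1 (Sum.elim 0 1)

theorem homogenization_mulVec_vecCons (t : ℝ) (x : Fin n → ℝ) :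
    homogenization A B α β *ᵥ vecCons t x =
      fun k => k.elim t (Sum.elim (fun i => A i ⬝ᵥ x - α i * t) fun j => B j ⬝ᵥ x - β j * t) := by
  funext k
  rcases k with _ | i | j <;> simp [homogenization, mulVec] <;> ring

theorem not_exists_le_homogenization_mulVec
    (h : ¬ ∃ x, (∀ i, α i ≤ (A *ᵥ x) i) ∧ ∀ j, β j < (B *ᵥ x) j) :
    ¬ ∃ w, homogenizationBound ≤ homogenization A B α β *ᵥ w := by
  rintro ⟨w, hw⟩
  rw [← cons_head_tail w, homogenization_mulVec_vecCons] at hw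
  have ht : 0 < vecHead w := by
    have := hw none
    simp only [homogenizationBound, Option.elim_none] at this
    linarith
  refine h ⟨(vecHead w)⁻¹ • vecTail w, fun i => ?_, fun j => ?_⟩
  · have := hw (some (.inl i))
    simp only [homogenizationBound, Option.elim_some, Sum.elim_inl, Pi.zero_apply,
      sub_nonneg] at this
    rw [mulVec_smul, Pi.smul_apply, smul_eq_mul, le_inv_mul_iff₀ ht, mul_comm]
    exact this
  · have := hw (some (.inr j))
    simp only [homogenizationBound, Option.elim_some, Sum.elim_inr, Pi.one_apply] at this
    rw [mulVec_smul, Pi.smul_apply, smul_eq_mul, lt_inv_mul_iff₀ ht, mul_comm]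
    change _ < B j ⬝ᵥ vecTail w
    linarith

variable [Fintype ι] [Fintype κ]

theorem dotProduct_homogenization_mulVec_vecCons_one (y : Option (ι ⊕ κ) → ℝ) (x : Fin n → ℝ) :
    y ⬝ᵥ (homogenization A B α β *ᵥ vecCons 1 x) =
      ∑ i, y (some (.inl i)) * (A i ⬝ᵥ x - α i) + ∑ j, y (some (.inr j)) * (B j ⬝ᵥ x - β j)
        + y none := by
  simp [homogenization_mulVec_vecCons, dotProduct, Fintype.sum_option]
  ring

theorem dotProduct_homogenizationBound (y : Option (ι ⊕ κ) → ℝ) :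
    y ⬝ᵥ homogenizationBound = y none + ∑ j, y (some (.inr j)) := by
  simp [homogenizationBound, dotProduct, Fintype.sum_option]

end Motzkin

theorem sum_mul_add_sum_mul_add_pos {ι κ : Type*} [Fintype ι] [Fintype κ]
    {lam f : ι → ℝ} {η g : κ → ℝ} {η₀ : ℝ} (hlam : 0 ≤ lam) (hf : 0 ≤ f) (hη : 0 ≤ η)
    (hg : ∀ j, 0 < g j) (hη₀ : 0 ≤ η₀) (hpos : 0 < η₀ + ∑ j, η j) :
    0 < ∑ i, lam i * f i + ∑ j, η j * g j + η₀ := by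
  have hlamf : 0 ≤ ∑ i, lam i * f i := Finset.sum_nonneg fun i _ => mul_nonneg (hlam i) (hf i)
  have hηg : 0 ≤ ∑ j, η j * g j := Finset.sum_nonneg fun j _ => mul_nonneg (hη j) (hg j).le
  rcases hη₀.eq_or_lt with rfl | hη₀
  · obtain ⟨j, -, hj⟩ := (Finset.sum_pos_iff_of_nonneg fun j _ => hη j).1 (by simpa using hpos)
    have : 0 < ∑ j, η j * g j := Finset.sum_pos' (fun j _ => mul_nonneg (hη j) (hg j).le)
      ⟨j, Finset.mem_univ j, mul_pos hj (hg j)⟩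
    linarith
  · linarith

/-- Corollary of Motzkin's transposition theorem: there is no `x` with
`A *ᵥ x ≥ α` and `B *ᵥ x > β` (componentwise) iff there are nonnegative
multipliers `λᵢ`, `η₀, ηⱼ` such that
`∑ᵢ λᵢ (Aᵢ⬝x − αᵢ) + ∑ⱼ ηⱼ (Bⱼ⬝x − βⱼ) + η₀` vanishes identically in `x`
and `η₀ + ∑ⱼ ηⱼ > 0`. -/
theorem motzkin_corollary (r s n : ℕ)
    (A : Matrix (Fin r) (Fin n) ℝ) (B : Matrix (Fin s) (Fin n) ℝ)
    (α : Fin r → ℝ) (β : Fin s → ℝ) :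
    (¬ ∃ x : Fin n → ℝ, (∀ i, α i ≤ A.mulVec x i) ∧ (∀ j, β j < B.mulVec x j)) ↔
      (∃ (lam : Fin r → ℝ) (η₀ : ℝ) (η : Fin s → ℝ),
        (∀ i, 0 ≤ lam i) ∧ 0 ≤ η₀ ∧ (∀ j, 0 ≤ η j) ∧
        (∀ x : Fin n → ℝ,
          (∑ i, lam i * (A i ⬝ᵥ x - α i)) + (∑ j, η j * (B j ⬝ᵥ x - β j)) + η₀ = 0) ∧
        0 < η₀ + ∑ j, η j) := by
  constructor
  · intro h
    obtain ⟨y, hy0, hy, hyc⟩ := exists_isFarkasCertificate_of_not_exists_le_mulVec _ _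
      (Motzkin.not_exists_le_homogenization_mulVec A B α β h)
    refine ⟨fun i => y (some (.inl i)), y none, fun j => y (some (.inr j)),
      fun i => hy0 _, hy0 _, fun j => hy0 _, fun x => ?_, ?_⟩
    · rw [← Motzkin.dotProduct_homogenization_mulVec_vecCons_one, dotProduct_mulVec, hy,
        zero_dotProduct]
    · rwa [← Motzkin.dotProduct_homogenizationBound]
  · rintro ⟨lam, η₀, η, hlam, hη₀, hη, hid, hpos⟩ ⟨x, hA, hB⟩
    exact (sum_mul_add_sum_mul_add_pos (f := fun i => A i ⬝ᵥ x - α i)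
      (g := fun j => B j ⬝ᵥ x - β j) hlam (fun i => sub_nonneg.2 (hA i)) hη
      (fun j => sub_pos.2 (hB j)) hη₀ hpos).ne' (hid x)
end

section
/- Let x range over column vectors in ℝⁿ and X over symmetric n×n real matrices, and write M(x,X) for the (n+1)×(n+1) block matrix [[1, xᵀ],[x, X]]. Let P₁,…,P_r and Q₁,…,Q_s be symmetric (n+1)×(n+1) real matrices and let W = {(x,X) : ⟨P_i, M(x,X)⟩ ≥ 0 for all i = 1,…,r and ⟨Q_j, M(x,X)⟩ > 0 for all j = 1,…,s}, where ⟨·,·⟩ is the trace inner product on matrices. Then W = ∅ if and only if there exist λ₁,…,λ_r ≥ 0 and η₀,η₁,…,η_s ≥ 0 such that Σ_{i=1}^r λ_i ⟨P_i, M(x,X)⟩ + Σ_{j=1}^s η_j ⟨Q_j, M(x,X)⟩ + η₀ = 0 for all x ∈ ℝⁿ and all symmetric X ∈ ℝ^{n×n}, and η₀ + η₁ + ⋯ + η_s > 0. -/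
open Matrix

/-- The `(n+1) × (n+1)` block matrix `[[1, xᵀ], [x, X]]`. -/
def blockM {n : ℕ} (x : Fin n → ℝ) (X : Matrix (Fin n) (Fin n) ℝ) :
    Matrix (Unit ⊕ Fin n) (Unit ⊕ Fin n) ℝ :=
  Matrix.fromBlocks (Matrix.of fun _ _ => (1 : ℝ)) (Matrix.of fun _ j => x j)
    (Matrix.of fun i _ => x i) X

/-- The trace inner product `⟨P, M⟩ = ∑ₖ ∑ₗ Pₖₗ Mₖₗ` of two real matrices. -/
def minner {ι : Type*} [Fintype ι] (P M : Matrix ι ι ℝ) : ℝ :=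
  ∑ k, ∑ l, P k l * M k l


lemma farkas_fin {ι : Type*} [Fintype ι] :
    ∀ (m : ℕ) (a : Fin m → ι → ℝ) (b : ι → ℝ),
    (∃ lam : Fin m → ℝ, (∀ i, 0 ≤ lam i) ∧ b = ∑ i, lam i • a i) ∨
    (∃ y : ι → ℝ, (∀ i, 0 ≤ y ⬝ᵥ a i) ∧ y ⬝ᵥ b < 0) := by
  intro m
  induction m with
  | zero =>
    intro a b
    by_cases hb : b = 0
    · exact Or.inl ⟨0, fun i => le_refl 0, by simp [hb]⟩
    · refine Or.inr ⟨-b, fun i => i.elim0, ?_⟩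
      rw [neg_dotProduct, neg_lt_zero]
      have h2 : 0 ≤ b ⬝ᵥ b := Finset.sum_nonneg fun i _ => mul_self_nonneg _
      rcases h2.lt_or_eq with h3 | h3
      · exact h3
      · exact absurd (dotProduct_self_eq_zero.mp h3.symm) hb
  | succ m ih =>
    intro a b
    set a' : Fin m → ι → ℝ := fun i => a i.castSucc with ha'
    set am : ι → ℝ := a (Fin.last m) with ham
    rcases ih a' b with ⟨lam, hlam, hb⟩ | ⟨y, hy, hyb⟩
    · refine Or.inl ⟨Fin.snoc lam 0, ?_, ?_⟩
      · intro i
        refine Fin.lastCases ?_ ?_ i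
        · simp
        · intro j; simpa using hlam j
      · rw [Fin.sum_univ_castSucc]
        simp only [Fin.snoc_castSucc, Fin.snoc_last, zero_smul, add_zero]
        exact hb
    · by_cases hm : 0 ≤ y ⬝ᵥ am
      · refine Or.inr ⟨y, ?_, hyb⟩
        intro i
        refine Fin.lastCases ?_ ?_ i
        · exact hm
        · intro j; exact hy j
      · push_neg at hm
        set μ : ℝ := y ⬝ᵥ am with hμ
        set a'' : Fin m → ι → ℝ := fun i => a' i - (y ⬝ᵥ a' i / μ) • am with ha''
        set b' : ι → ℝ := b - (y ⬝ᵥ b / μ) • am with hb'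
        rcases ih a'' b' with ⟨lam, hlam, hbb⟩ | ⟨y', hy', hy'b⟩
        · set t : ℝ := (y ⬝ᵥ b - ∑ i, lam i * (y ⬝ᵥ a' i)) / μ with ht
          have htnn : 0 ≤ t := by
            have hnn : 0 ≤ ∑ i, lam i * (y ⬝ᵥ a' i) :=
              Finset.sum_nonneg fun i _ => mul_nonneg (hlam i) (hy i)
            rw [ht, div_nonneg_iff]
            right
            exact ⟨by linarith, hm.le⟩
          refine Or.inl ⟨Fin.snoc lam t, ?_, ?_⟩
          · intro i
            refine Fin.lastCases ?_ ?_ i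
            · simpa using htnn
            · intro j; simpa using hlam j
          · rw [Fin.sum_univ_castSucc]
            simp only [Fin.snoc_castSucc, Fin.snoc_last]
            have hbexp : b = b' + (y ⬝ᵥ b / μ) • am := by rw [hb']; abel
            rw [hbexp, hbb]
            have hsum : ∑ i, lam i • a'' i
                = ∑ i, lam i • a' i - (∑ i, lam i * (y ⬝ᵥ a' i) / μ) • am := by
              rw [Finset.sum_smul, ← Finset.sum_sub_distrib]
              refine Finset.sum_congr rfl fun i _ => ?_
              rw [ha'']
              simp only [smul_sub, smul_smul]
              rw [mul_div_assoc]
            rw [hsum, ht]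
            have : (y ⬝ᵥ b - ∑ i, lam i * (y ⬝ᵥ a' i)) / μ
                = y ⬝ᵥ b / μ - ∑ i, lam i * (y ⬝ᵥ a' i) / μ := by
              rw [sub_div, Finset.sum_div]
            rw [this, sub_smul]
            simp only [ha']
            abel
        · refine Or.inr ⟨y' - (y' ⬝ᵥ am / μ) • y, ?_, ?_⟩
          · intro i
            rw [sub_dotProduct, smul_dotProduct, smul_eq_mul]
            refine Fin.lastCases ?_ ?_ i
            · rw [← ham, ← hμ, div_mul_cancel₀ _ (ne_of_lt hm), sub_self]
            · intro j
              have := hy' j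
              rw [ha''] at this
              rw [dotProduct_sub, dotProduct_smul, smul_eq_mul] at this
              have hrw : y' ⬝ᵥ a j.castSucc - y' ⬝ᵥ am / μ * (y ⬝ᵥ a j.castSucc)
                  = y' ⬝ᵥ a' j - y ⬝ᵥ a' j / μ * (y' ⬝ᵥ am) := by
                rw [ha']; ring
              rw [hrw]; exact this
          · rw [sub_dotProduct, smul_dotProduct, smul_eq_mul]
            have := hy'b
            rw [hb', dotProduct_sub, dotProduct_smul, smul_eq_mul] at this
            have hrw : y' ⬝ᵥ b - y' ⬝ᵥ am / μ * (y ⬝ᵥ b)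
                = y' ⬝ᵥ b - y ⬝ᵥ b / μ * (y' ⬝ᵥ am) := by ring
            rw [hrw]; exact this

lemma farkas_gen {ι μ : Type*} [Fintype ι] [Fintype μ] (a : μ → ι → ℝ) (b : ι → ℝ) :
    (∃ lam : μ → ℝ, (∀ i, 0 ≤ lam i) ∧ b = ∑ i, lam i • a i) ∨
    (∃ y : ι → ℝ, (∀ i, 0 ≤ y ⬝ᵥ a i) ∧ y ⬝ᵥ b < 0) := by
  set e := (Fintype.equivFin μ).symm
  rcases farkas_fin (Fintype.card μ) (fun i => a (e i)) b with ⟨lam, hlam, hb⟩ | ⟨y, hy, hyb⟩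
  · refine Or.inl ⟨fun j => lam (e.symm j), fun j => hlam _, ?_⟩
    rw [hb]
    rw [← Equiv.sum_comp e (fun j => lam (e.symm j) • a j)]
    simp
  · exact Or.inr ⟨y, fun i => by simpa using hy (e.symm i), hyb⟩

lemma affine_farkas {ι κ : Type*} [Fintype ι] [Fintype κ] [DecidableEq ι]
    (A : ι → κ → ℝ) (b : ι → ℝ)
    (h : ¬ ∃ x : κ → ℝ, ∀ i, b i ≤ A i ⬝ᵥ x) :
    ∃ y : ι → ℝ, (∀ i, 0 ≤ y i) ∧ (∀ k, ∑ i, y i * A i k = 0) ∧ 0 < ∑ i, y i * b i := by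
  set g : (κ ⊕ (κ ⊕ ι)) → ι → ℝ :=
    Sum.elim (fun k i => A i k) (Sum.elim (fun k i => -(A i k)) (fun j => -(Pi.single j 1)))
    with hg
  rcases farkas_gen g b with ⟨lam, hlam, hb⟩ | ⟨y, hy, hyb⟩
  · exfalso
    apply h
    refine ⟨fun k => lam (Sum.inl k) - lam (Sum.inr (Sum.inl k)), fun i => ?_⟩
    have hbi : b i = ∑ m, lam m * g m i := by
      rw [hb]; rw [Finset.sum_apply]; simp
    rw [hbi]
    rw [Fintype.sum_sum_type, Fintype.sum_sum_type]
    have h3 : ∑ j, lam (Sum.inr (Sum.inr j)) * g (Sum.inr (Sum.inr j)) i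
        = -(lam (Sum.inr (Sum.inr i))) := by
      rw [hg]
      simp only [Sum.elim_inr, Pi.neg_apply]
      rw [Finset.sum_eq_single i]
      · simp
      · intro j _ hji
        rw [Pi.single_apply]
        simp [(Ne.symm hji : i ≠ j)]
      · simp
    rw [h3, hg]
    simp only [Sum.elim_inl, Sum.elim_inr]
    have hA : A i ⬝ᵥ (fun k => lam (Sum.inl k) - lam (Sum.inr (Sum.inl k)))
        = ∑ k, lam (Sum.inl k) * A i k + ∑ k, lam (Sum.inr (Sum.inl k)) * -A i k := by
      simp only [dotProduct, mul_neg]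
      rw [← Finset.sum_add_distrib]
      refine Finset.sum_congr rfl fun k' _ => by ring
    rw [hA]
    have := hlam (Sum.inr (Sum.inr i))
    linarith
  · refine ⟨-y, ?_, ?_, ?_⟩
    · intro i
      have := hy (Sum.inr (Sum.inr i))
      rw [hg] at this
      simp only [Sum.elim_inr] at this
      rw [dotProduct_neg, dotProduct_single] at this
      simpa using this
    · intro k
      have h1 := hy (Sum.inl k)
      have h2 := hy (Sum.inr (Sum.inl k))
      simp only [hg, Sum.elim_inl, Sum.elim_inr, dotProduct, mul_neg,
        Finset.sum_neg_distrib] at h1 h2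
      have hsum : ∑ i, y i * A i k = 0 := le_antisymm (by linarith) h1
      simp only [Pi.neg_apply, neg_mul, Finset.sum_neg_distrib, hsum, neg_zero]
    · have : ∑ i, (-y) i * b i = -∑ i, y i * b i := by
        simp only [Pi.neg_apply, neg_mul, Finset.sum_neg_distrib]
      rw [this]
      simp only [dotProduct] at hyb
      linarith

lemma dot_elim {α β : Type*} [Fintype α] [Fintype β] (u : α → ℝ) (v : β → ℝ)
    (z : α ⊕ β → ℝ) :
    Sum.elim u v ⬝ᵥ z = (u ⬝ᵥ (z ∘ Sum.inl)) + (v ⬝ᵥ (z ∘ Sum.inr)) := by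
  simp [dotProduct, Fintype.sum_sum_type]

lemma motzkin_gen {κ : Type*} [Fintype κ] (r s : ℕ)
    (A : Fin r → κ → ℝ) (b : Fin r → ℝ) (C : Fin s → κ → ℝ) (e : Fin s → ℝ)
    (h : ¬ ∃ x : κ → ℝ, (∀ i, 0 ≤ A i ⬝ᵥ x + b i) ∧ (∀ j, 0 < C j ⬝ᵥ x + e j)) :
    ∃ (lam : Fin r → ℝ) (η₀ : ℝ) (η : Fin s → ℝ),
      (∀ i, 0 ≤ lam i) ∧ 0 ≤ η₀ ∧ (∀ j, 0 ≤ η j) ∧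
      (∀ x : κ → ℝ,
        ∑ i, lam i * (A i ⬝ᵥ x + b i) + ∑ j, η j * (C j ⬝ᵥ x + e j) + η₀ = 0) ∧
      0 < η₀ + ∑ j, η j := by
  set A' : (Fin r ⊕ (Fin s ⊕ Unit)) → (κ ⊕ Unit) → ℝ :=
    Sum.elim (fun i => Sum.elim (A i) (fun _ => b i))
      (Sum.elim (fun j => Sum.elim (C j) (fun _ => e j))
        (fun _ => Sum.elim 0 (fun _ => 1))) with hA'
  set b' : (Fin r ⊕ (Fin s ⊕ Unit)) → ℝ :=
    Sum.elim 0 (Sum.elim (fun _ => 1) (fun _ => 1)) with hb'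
  have rowA : ∀ (z : (κ ⊕ Unit) → ℝ) (i : Fin r),
      A' (Sum.inl i) ⬝ᵥ z = A i ⬝ᵥ (z ∘ Sum.inl) + b i * z (Sum.inr ()) := by
    intro z i
    rw [hA']
    simp only [Sum.elim_inl]
    rw [dot_elim]
    congr 1
    simp [dotProduct]
  have rowC : ∀ (z : (κ ⊕ Unit) → ℝ) (j : Fin s),
      A' (Sum.inr (Sum.inl j)) ⬝ᵥ z = C j ⬝ᵥ (z ∘ Sum.inl) + e j * z (Sum.inr ()) := by
    intro z j
    rw [hA']
    simp only [Sum.elim_inr, Sum.elim_inl]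
    rw [dot_elim]
    congr 1
    simp [dotProduct]
  have rowT : ∀ (z : (κ ⊕ Unit) → ℝ),
      A' (Sum.inr (Sum.inr ())) ⬝ᵥ z = z (Sum.inr ()) := by
    intro z
    rw [hA']
    simp only [Sum.elim_inr]
    rw [dot_elim]
    simp [dotProduct]
  have hinf : ¬ ∃ z : (κ ⊕ Unit) → ℝ, ∀ i, b' i ≤ A' i ⬝ᵥ z := by
    rintro ⟨z, hz⟩
    apply h
    set t : ℝ := z (Sum.inr ()) with htdef
    have ht : 1 ≤ t := by
      have := hz (Sum.inr (Sum.inr ()))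
      rwa [rowT, hb'] at this
    have ht0 : 0 < t := lt_of_lt_of_le one_pos ht
    set x : κ → ℝ := fun k => z (Sum.inl k) / t with hx
    have hdiv : ∀ w : κ → ℝ, w ⬝ᵥ x = (w ⬝ᵥ (z ∘ Sum.inl)) / t := by
      intro w
      simp only [dotProduct, Finset.sum_div]
      exact Finset.sum_congr rfl fun k _ => by rw [hx]; simp; ring
    refine ⟨x, fun i => ?_, fun j => ?_⟩
    · have h1 := hz (Sum.inl i)
      rw [rowA, hb'] at h1
      simp only [Sum.elim_inl, Pi.zero_apply] at h1
      rw [hdiv, div_add' _ _ _ ht0.ne']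
      exact div_nonneg h1 ht0.le
    · have h1 := hz (Sum.inr (Sum.inl j))
      rw [rowC, hb'] at h1
      simp only [Sum.elim_inr, Sum.elim_inl] at h1
      rw [hdiv, div_add' _ _ _ ht0.ne']
      exact div_pos (lt_of_lt_of_le one_pos h1) ht0
  obtain ⟨y, hy, hyA, hyb⟩ := affine_farkas A' b' hinf
  refine ⟨fun i => y (Sum.inl i), y (Sum.inr (Sum.inr ())), fun j => y (Sum.inr (Sum.inl j)),
    fun i => hy _, hy _, fun j => hy _, ?_, ?_⟩
  · intro x
    have hk : ∀ k : κ, ∑ i, y (Sum.inl i) * A i k + ∑ j, y (Sum.inr (Sum.inl j)) * C j k = 0 := by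
      intro k
      have := hyA (Sum.inl k)
      rw [Fintype.sum_sum_type] at this
      rw [Fintype.sum_sum_type] at this
      simpa [hA'] using this
    have hc : ∑ i, y (Sum.inl i) * b i + ∑ j, y (Sum.inr (Sum.inl j)) * e j
        + y (Sum.inr (Sum.inr ())) = 0 := by
      have := hyA (Sum.inr ())
      rw [Fintype.sum_sum_type] at this
      rw [Fintype.sum_sum_type] at this
      simpa [hA', add_assoc] using this
    have expand : ∑ i, y (Sum.inl i) * (A i ⬝ᵥ x + b i)
          + ∑ j, y (Sum.inr (Sum.inl j)) * (C j ⬝ᵥ x + e j)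
        = ∑ k, (∑ i, y (Sum.inl i) * A i k + ∑ j, y (Sum.inr (Sum.inl j)) * C j k) * x k
          + (∑ i, y (Sum.inl i) * b i + ∑ j, y (Sum.inr (Sum.inl j)) * e j) := by
      simp only [dotProduct, mul_add, Finset.sum_add_distrib, Finset.mul_sum,
        add_mul, Finset.sum_mul]
      rw [Finset.sum_comm (f := fun i k => y (Sum.inl i) * (A i k * x k))]
      rw [Finset.sum_comm (f := fun j k => y (Sum.inr (Sum.inl j)) * (C j k * x k))]
      have e1 : ∀ k : κ, ∑ i, y (Sum.inl i) * (A i k * x k)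
          = ∑ i, y (Sum.inl i) * A i k * x k :=
        fun k => Finset.sum_congr rfl fun i _ => by ring
      have e2 : ∀ k : κ, ∑ j, y (Sum.inr (Sum.inl j)) * (C j k * x k)
          = ∑ j, y (Sum.inr (Sum.inl j)) * C j k * x k :=
        fun k => Finset.sum_congr rfl fun j _ => by ring
      simp only [e1, e2]
      abel
    rw [expand]
    simp only [hk, zero_mul, Finset.sum_const_zero, zero_add]
    linarith [hc]
  · have := hyb
    rw [Fintype.sum_sum_type] at this
    rw [Fintype.sum_sum_type] at this
    simp only [hb', Sum.elim_inl, Sum.elim_inr, Pi.zero_apply, mul_zero, mul_one,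
      Finset.sum_const_zero, zero_add, Finset.univ_unique, Finset.sum_singleton] at this
    linarith

/-- coefficient vector of the affine form `(x,X) ↦ minner P (blockM x X)`. -/
def mcoef {n : ℕ} (P : Matrix (Unit ⊕ Fin n) (Unit ⊕ Fin n) ℝ) :
    (Fin n ⊕ (Fin n × Fin n)) → ℝ :=
  Sum.elim (fun j => P (Sum.inl ()) (Sum.inr j) + P (Sum.inr j) (Sum.inl ()))
    (fun p => P (Sum.inr p.1) (Sum.inr p.2))

lemma minner_blockM {n : ℕ} (P : Matrix (Unit ⊕ Fin n) (Unit ⊕ Fin n) ℝ)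
    (x : Fin n → ℝ) (X : Matrix (Fin n) (Fin n) ℝ) :
    minner P (blockM x X)
      = mcoef P ⬝ᵥ (Sum.elim x (fun p => X p.1 p.2)) + P (Sum.inl ()) (Sum.inl ()) := by
  simp only [minner, blockM, mcoef, dotProduct, Fintype.sum_sum_type,
    Fintype.sum_prod_type, Sum.elim_inl, Sum.elim_inr, Matrix.fromBlocks_apply₁₁,
    Matrix.fromBlocks_apply₁₂, Matrix.fromBlocks_apply₂₁, Matrix.fromBlocks_apply₂₂,
    Matrix.of_apply, Finset.univ_unique, Finset.sum_singleton, add_mul,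
    Finset.sum_add_distrib, mul_one]
  ring_nf

lemma symmetrize_isSymm {n : ℕ} (X : Matrix (Fin n) (Fin n) ℝ) :
    ((1/2 : ℝ) • (X + Xᵀ)).IsSymm := by
  unfold Matrix.IsSymm
  rw [Matrix.transpose_smul, Matrix.transpose_add, Matrix.transpose_transpose, add_comm]

lemma minner_blockM_symmetrize {n : ℕ} (P : Matrix (Unit ⊕ Fin n) (Unit ⊕ Fin n) ℝ)
    (hP : P.IsSymm) (x : Fin n → ℝ) (X : Matrix (Fin n) (Fin n) ℝ) :
    minner P (blockM x X) = minner P (blockM x ((1/2 : ℝ) • (X + Xᵀ))) := by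
  rw [minner_blockM, minner_blockM]
  congr 1
  simp only [dotProduct, Fintype.sum_sum_type]
  congr 1
  simp only [Fintype.sum_prod_type, mcoef, Sum.elim_inr]
  have hswap : ∑ i, ∑ j, P (Sum.inr i) (Sum.inr j) * X j i
      = ∑ i, ∑ j, P (Sum.inr i) (Sum.inr j) * X i j := by
    rw [Finset.sum_comm]
    refine Finset.sum_congr rfl fun i _ => Finset.sum_congr rfl fun j _ => ?_
    rw [hP.apply]
  have hterm : ∀ i j, P (Sum.inr i) (Sum.inr j) * (((1/2 : ℝ) • (X + Xᵀ)) i j)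
      = P (Sum.inr i) (Sum.inr j) * X i j / 2 + P (Sum.inr i) (Sum.inr j) * X j i / 2 := by
    intro i j
    simp only [Matrix.smul_apply, Matrix.add_apply, Matrix.transpose_apply, smul_eq_mul]
    ring
  have expand : ∑ i, ∑ j, P (Sum.inr i) (Sum.inr j) * (((1/2 : ℝ) • (X + Xᵀ)) i j)
      = (∑ i, ∑ j, P (Sum.inr i) (Sum.inr j) * X i j) / 2
        + (∑ i, ∑ j, P (Sum.inr i) (Sum.inr j) * X j i) / 2 := by
    simp only [hterm, Finset.sum_add_distrib, ← Finset.sum_div]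
  rw [expand, hswap]
  ring

/-- Motzkin's transposition theorem in matrix form: with `x` ranging over `ℝⁿ`
and `X` over symmetric `n × n` matrices, the set
`W = {(x,X) : ⟨Pᵢ, M(x,X)⟩ ≥ 0 ∀i, ⟨Qⱼ, M(x,X)⟩ > 0 ∀j}` is empty iff there
are nonnegative `λᵢ`, `η₀, ηⱼ` with
`∑ᵢ λᵢ⟨Pᵢ, M(x,X)⟩ + ∑ⱼ ηⱼ⟨Qⱼ, M(x,X)⟩ + η₀ ≡ 0` and `η₀ + ∑ⱼ ηⱼ > 0`. -/
theorem motzkin_matrix_form (n r s : ℕ)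
    (P : Fin r → Matrix (Unit ⊕ Fin n) (Unit ⊕ Fin n) ℝ)
    (Q : Fin s → Matrix (Unit ⊕ Fin n) (Unit ⊕ Fin n) ℝ)
    (hP : ∀ i, (P i).IsSymm) (hQ : ∀ j, (Q j).IsSymm) :
    (¬ ∃ (x : Fin n → ℝ) (X : Matrix (Fin n) (Fin n) ℝ), X.IsSymm ∧
        (∀ i, 0 ≤ minner (P i) (blockM x X)) ∧ (∀ j, 0 < minner (Q j) (blockM x X))) ↔
      (∃ (lam : Fin r → ℝ) (η₀ : ℝ) (η : Fin s → ℝ),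
        (∀ i, 0 ≤ lam i) ∧ 0 ≤ η₀ ∧ (∀ j, 0 ≤ η j) ∧
        (∀ (x : Fin n → ℝ) (X : Matrix (Fin n) (Fin n) ℝ), X.IsSymm →
          (∑ i, lam i * minner (P i) (blockM x X))
            + (∑ j, η j * minner (Q j) (blockM x X)) + η₀ = 0) ∧
        0 < η₀ + ∑ j, η j) := by
  constructor
  · intro hW
    have hinf : ¬ ∃ z : (Fin n ⊕ (Fin n × Fin n)) → ℝ,
        (∀ i, 0 ≤ mcoef (P i) ⬝ᵥ z + (P i) (Sum.inl ()) (Sum.inl ())) ∧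
        (∀ j, 0 < mcoef (Q j) ⬝ᵥ z + (Q j) (Sum.inl ()) (Sum.inl ())) := by
      rintro ⟨z, h1, h2⟩
      apply hW
      set x : Fin n → ℝ := fun k => z (Sum.inl k) with hxdef
      set X : Matrix (Fin n) (Fin n) ℝ := Matrix.of fun i j => z (Sum.inr (i, j)) with hXdef
      have hz : Sum.elim x (fun p => X p.1 p.2) = z := by
        funext m
        cases m with
        | inl k => rfl
        | inr p => obtain ⟨i, j⟩ := p; rfl
      refine ⟨x, (1/2 : ℝ) • (X + Xᵀ), symmetrize_isSymm X, fun i => ?_, fun j => ?_⟩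
      · rw [← minner_blockM_symmetrize _ (hP i), minner_blockM, hz]
        exact h1 i
      · rw [← minner_blockM_symmetrize _ (hQ j), minner_blockM, hz]
        exact h2 j
    obtain ⟨lam, η₀, η, hl, h0, hh, hid, hpos⟩ :=
      motzkin_gen r s (fun i => mcoef (P i)) (fun i => (P i) (Sum.inl ()) (Sum.inl ()))
        (fun j => mcoef (Q j)) (fun j => (Q j) (Sum.inl ()) (Sum.inl ())) hinf
    refine ⟨lam, η₀, η, hl, h0, hh, ?_, hpos⟩
    intro x X _hX
    have := hid (Sum.elim x (fun p => X p.1 p.2))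
    simp only [← minner_blockM] at this
    exact this
  · rintro ⟨lam, η₀, η, hl, h0, hh, hid, hpos⟩ ⟨x, X, hX, hge, hgt⟩
    have hidx := hid x X hX
    have s1 : 0 ≤ ∑ i, lam i * minner (P i) (blockM x X) :=
      Finset.sum_nonneg fun i _ => mul_nonneg (hl i) (hge i)
    have s2 : 0 ≤ ∑ j, η j * minner (Q j) (blockM x X) :=
      Finset.sum_nonneg fun j _ => mul_nonneg (hh j) (hgt j).le
    have hs2 : ∑ j, η j * minner (Q j) (blockM x X) = 0 := by linarith
    have hηj := (Finset.sum_eq_zero_iff_of_nonneg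
      (fun j _ => mul_nonneg (hh j) (hgt j).le)).mp hs2
    have hall : ∑ j, η j = 0 := Finset.sum_eq_zero fun j _ => by
      rcases mul_eq_zero.mp (hηj j (Finset.mem_univ j)) with h | h
      · exact h
      · exact absurd h (ne_of_gt (hgt j))
    have hη0 : η₀ = 0 := by linarith
    rw [hall, hη0] at hpos
    simp at hpos
end

section
/- Let f_i(x) = xᵀA_i x + 2α_iᵀx + a_i (i = 1,…,r) and g_j(x) = xᵀB_j x + 2β_jᵀx + b_j (j = 1,…,s) be concave quadratic polynomials on ℝⁿ (so each A_i and each B_j is symmetric negative semidefinite), and set P_i = [[a_i, α_iᵀ],[α_i, A_i]] and Q_j = [[b_j, β_jᵀ],[β_j, B_j]]. Let K = {x ∈ ℝⁿ : f₁(x) ≥ 0, …, f_r(x) ≥ 0, g₁(x) > 0, …, g_s(x) > 0} and let K₁ = {x ∈ ℝⁿ : there exists a symmetric n×n matrix X such that M(x,X) = [[1, xᵀ],[x, X]] is positive semidefinite, ⟨P_i, M(x,X)⟩ ≥ 0 for all i, and ⟨Q_j, M(x,X)⟩ > 0 for all j}. Then K = K₁. -/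
open Matrix

/-- The `(n+1) × (n+1)` block matrix `[[a, αᵀ], [α, A]]`. -/
def liftP {n : ℕ} (a : ℝ) (α : Fin n → ℝ) (A : Matrix (Fin n) (Fin n) ℝ) :
    Matrix (Unit ⊕ Fin n) (Unit ⊕ Fin n) ℝ :=
  Matrix.fromBlocks (Matrix.of fun _ _ => a) (Matrix.of fun _ j => α j)
    (Matrix.of fun i _ => α i) A

/-- A real matrix is negative semidefinite if it is symmetric and its quadratic
form is nonpositive. -/
def IsNegSemidef {ι : Type*} [Fintype ι] (A : Matrix ι ι ℝ) : Prop :=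
  A.IsSymm ∧ ∀ x : ι → ℝ, x ⬝ᵥ A.mulVec x ≤ 0

/-!
Taking `X = x xᵀ` makes `⟨P, M(x, X)⟩` equal to `f(x)`, so `K ⊆ K₁`. Conversely, `M(x, X) ⪰ 0`
says, via the Schur complement of its corner entry `1`, that `X - x xᵀ ⪰ 0`; then
`⟨P, M(x, X)⟩ = f(x) + ⟨A, X - x xᵀ⟩ ≤ f(x)` since `A ⪯ 0`, so the linearized constraints imply
the original ones.
-/

lemma blockM_eq_fromBlocks {n : ℕ} (x : Fin n → ℝ) (X : Matrix (Fin n) (Fin n) ℝ) :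
    blockM x X = fromBlocks 1 (replicateRow Unit x) (replicateRow Unit x)ᴴ X := by
  ext (i | i) (j | j) <;> rfl

lemma blockM_posSemidef_iff {n : ℕ} (x : Fin n → ℝ) (X : Matrix (Fin n) (Fin n) ℝ) :
    (blockM x X).PosSemidef ↔ (X - vecMulVec x x).PosSemidef := by
  let : Invertible (1 : Matrix Unit Unit ℝ) := invertibleOne
  rw [blockM_eq_fromBlocks, PosDef.fromBlocks₁₁ _ _ PosDef.one, inv_one, Matrix.mul_one,
    conjTranspose_replicateRow, star_trivial, ← vecMulVec_eq]

section minner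

variable {ι : Type*} [Fintype ι]

lemma minner_sub_right (P M N : Matrix ι ι ℝ) : minner P (M - N) = minner P M - minner P N := by
  simp only [minner, Matrix.sub_apply, mul_sub, Finset.sum_sub_distrib]

lemma minner_sum_right {κ : Type*} (P : Matrix ι ι ℝ) (s : Finset κ) (M : κ → Matrix ι ι ℝ) :
    minner P (∑ k ∈ s, M k) = ∑ k ∈ s, minner P (M k) := by
  simp only [minner, Matrix.sum_apply, Finset.mul_sum]
  exact (Finset.sum_congr rfl fun _ _ => Finset.sum_comm).trans Finset.sum_comm

lemma minner_vecMulVec (A : Matrix ι ι ℝ) (v : ι → ℝ) :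
    minner A (vecMulVec v v) = v ⬝ᵥ A *ᵥ v := by
  simp only [minner, vecMulVec_apply, dotProduct, mulVec, Finset.mul_sum]
  exact Finset.sum_congr rfl fun _ _ => Finset.sum_congr rfl fun _ _ => by ring

-- A positive semidefinite matrix is a sum of rank-one matrices `v vᵀ`.
lemma minner_nonpos_of_isNegSemidef_of_posSemidef {A Y : Matrix ι ι ℝ} (hA : IsNegSemidef A)
    (hY : Y.PosSemidef) : minner A Y ≤ 0 := by
  obtain ⟨m, v, rfl⟩ := posSemidef_iff_eq_sum_vecMulVec.mp hY
  rw [minner_sum_right]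
  refine Finset.sum_nonpos fun k _ => ?_
  rw [star_trivial, minner_vecMulVec]
  exact hA.2 _

end minner

lemma minner_liftP_blockM {n : ℕ} (a : ℝ) (α : Fin n → ℝ) (A : Matrix (Fin n) (Fin n) ℝ)
    (x : Fin n → ℝ) (X : Matrix (Fin n) (Fin n) ℝ) :
    minner (liftP a α A) (blockM x X) = minner A X + 2 * (α ⬝ᵥ x) + a := by
  simp only [minner, liftP, blockM, Fintype.sum_sum_type, Finset.univ_unique,
    Finset.sum_singleton, fromBlocks_apply₁₁, fromBlocks_apply₁₂, fromBlocks_apply₂₁,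
    fromBlocks_apply₂₂, of_apply, dotProduct, Finset.sum_add_distrib]
  ring

lemma minner_liftP_blockM_vecMulVec {n : ℕ} (a : ℝ) (α : Fin n → ℝ)
    (A : Matrix (Fin n) (Fin n) ℝ) (x : Fin n → ℝ) :
    minner (liftP a α A) (blockM x (vecMulVec x x)) = x ⬝ᵥ A *ᵥ x + 2 * (α ⬝ᵥ x) + a := by
  rw [minner_liftP_blockM, minner_vecMulVec]

lemma blockM_vecMulVec_posSemidef {n : ℕ} (x : Fin n → ℝ) :
    (blockM x (vecMulVec x x)).PosSemidef :=
  (blockM_posSemidef_iff x _).mpr (by simpa using PosSemidef.zero)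

lemma minner_liftP_blockM_le {n : ℕ} (a : ℝ) (α : Fin n → ℝ) {A : Matrix (Fin n) (Fin n) ℝ}
    (hA : IsNegSemidef A) {x : Fin n → ℝ} {X : Matrix (Fin n) (Fin n) ℝ}
    (hM : (blockM x X).PosSemidef) :
    minner (liftP a α A) (blockM x X) ≤ x ⬝ᵥ A *ᵥ x + 2 * (α ⬝ᵥ x) + a := by
  have hgap := minner_nonpos_of_isNegSemidef_of_posSemidef hA ((blockM_posSemidef_iff x X).mp hM)
  rw [minner_sub_right, minner_vecMulVec] at hgap
  rw [minner_liftP_blockM]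
  linarith

/-- For concave quadratic polynomials `fᵢ(x) = xᵀAᵢx + 2αᵢᵀx + aᵢ` and
`gⱼ(x) = xᵀBⱼx + 2βⱼᵀx + bⱼ`, the solution set `K` of
`fᵢ(x) ≥ 0, gⱼ(x) > 0` equals its linearization `K₁`. -/
theorem cq_linearization_eq (n r s : ℕ)
    (A : Fin r → Matrix (Fin n) (Fin n) ℝ) (α : Fin r → Fin n → ℝ) (a : Fin r → ℝ)
    (B : Fin s → Matrix (Fin n) (Fin n) ℝ) (β : Fin s → Fin n → ℝ) (b : Fin s → ℝ)
    (hA : ∀ i, IsNegSemidef (A i)) (hB : ∀ j, IsNegSemidef (B j)) :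
    {x : Fin n → ℝ |
        (∀ i, 0 ≤ x ⬝ᵥ (A i).mulVec x + 2 * (α i ⬝ᵥ x) + a i) ∧
        (∀ j, 0 < x ⬝ᵥ (B j).mulVec x + 2 * (β j ⬝ᵥ x) + b j)} =
      {x : Fin n → ℝ | ∃ X : Matrix (Fin n) (Fin n) ℝ, X.IsSymm ∧
          (blockM x X).PosSemidef ∧
          (∀ i, 0 ≤ minner (liftP (a i) (α i) (A i)) (blockM x X)) ∧
          (∀ j, 0 < minner (liftP (b j) (β j) (B j)) (blockM x X))} := by
  ext x
  constructor
  · rintro ⟨hf, hg⟩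
    refine ⟨vecMulVec x x, transpose_vecMulVec x x, blockM_vecMulVec_posSemidef x,
      fun i => ?_, fun j => ?_⟩
    · simpa only [minner_liftP_blockM_vecMulVec] using hf i
    · simpa only [minner_liftP_blockM_vecMulVec] using hg j
  · rintro ⟨X, -, hM, hf, hg⟩
    exact ⟨fun i => (hf i).trans (minner_liftP_blockM_le _ _ (hA i) hM),
      fun j => (hg j).trans_le (minner_liftP_blockM_le _ _ (hB j) hM)⟩
end

section
/- Let 𝒜 = {y ∈ ℝ^m : A_i·y − α_i ≥ 0 for i = 1,…,r and B_j·y − β_j > 0 for j = 1,…,s} be a nonempty set defined by finitely many affine inequalities, and let ℬ ⊆ ℝ^m be a nonempty closed convex set with 𝒜 ∩ ℬ = ∅. If there is no affine function L : ℝ^m → ℝ with L(y) > 0 for all y ∈ 𝒜 and L(y) ≤ 0 for all y ∈ ℬ, then there exist an affine function L₀ : ℝ^m → ℝ that is not identically zero and real numbers δ₁,…,δ_r ≥ 0 such that L₀(y) = Σ_{i=1}^r δ_i (A_i·y − α_i) for all y ∈ ℝ^m, and L₀(y) ≤ 0 for all y ∈ ℬ. -/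
/-!
Separate `𝒜` from `ℬ` weakly by a nonzero affine function `L`, nonnegative on `𝒜` and nonpositive
on `ℬ`. By the affine Farkas lemma, `L = ∑ δᵢ (Aᵢ·y − αᵢ) + ∑ εⱼ (Bⱼ·y − βⱼ) + δ₀` with
nonnegative coefficients; Farkas rests on the closedness of finitely generated cones, which
Carathéodory's reduction to linearly independent generators provides. If some `εⱼ` or `δ₀` were
nonzero, `L` would be positive on `𝒜`, which is excluded; so `L` itself is the required
combination.
-/

open Set Metric Matrix

namespace PointedCone

variable {E : Type*} [AddCommGroup E] [Module ℝ E]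

lemma mem_hull_range_iff {ι : Type*} [Fintype ι] {v : ι → E} {x : E} :
    x ∈ hull ℝ (range v) ↔ ∃ c : ι → ℝ, (∀ i, 0 ≤ c i) ∧ ∑ i, c i • v i = x := by
  refine ⟨fun hx => ?_, ?_⟩
  · obtain ⟨c, rfl⟩ := (Submodule.mem_span_range_iff_exists_fun _).1 hx
    exact ⟨fun i => c i, fun i => (c i).2, rfl⟩
  · rintro ⟨c, hc, rfl⟩
    exact Submodule.sum_mem _ fun i _ => (hull ℝ _).smul_mem (hc i) (subset_hull (mem_range_self i))

lemma mem_hull_finset_iff {s : Finset E} {x : E} :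
    x ∈ hull ℝ (s : Set E) ↔ ∃ c : E → ℝ, (∀ y ∈ s, 0 ≤ c y) ∧ ∑ y ∈ s, c y • y = x := by
  refine ⟨fun hx => ?_, ?_⟩
  · obtain ⟨c, -, rfl⟩ := Submodule.mem_span_finset.1 hx
    exact ⟨fun y => c y, fun y _ => (c y).2, rfl⟩
  · rintro ⟨c, hc, rfl⟩
    exact Submodule.sum_mem _ fun y hy => (hull ℝ _).smul_mem (hc y hy) (subset_hull hy)

/-- Carathéodory: subtract the largest multiple of a linear dependence that keeps every
coefficient nonnegative. -/
lemma exists_mem_hull_erase_of_not_linearIndepOn [DecidableEq E] {s : Finset E}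
    (hs : ¬LinearIndepOn ℝ id (s : Set E)) {x : E} (hx : x ∈ hull ℝ (s : Set E)) :
    ∃ y ∈ s, x ∈ hull ℝ (s.erase y : Set E) := by
  obtain ⟨c, hc, rfl⟩ := mem_hull_finset_iff.1 hx
  have hdep : ∃ g : E → ℝ, ∑ y ∈ s, g y • y = 0 ∧ ∃ y ∈ s, 0 < g y := by
    obtain ⟨g, hg, y, hy, hgy⟩ := not_linearIndepOn_finset_iff.1 hs
    rcases hgy.lt_or_gt with hneg | hpos
    · exact ⟨-g, by simpa [neg_smul, Finset.sum_neg_distrib] using hg, y, hy, by simpa⟩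
    · exact ⟨g, by simpa using hg, y, hy, hpos⟩
  obtain ⟨g, hg, hgpos⟩ := hdep
  obtain ⟨y₀, hy₀, hmin⟩ := Finset.exists_min_image (s.filter (0 < g ·)) (fun y => c y / g y)
    (by simpa [Finset.Nonempty] using hgpos)
  rw [Finset.mem_filter] at hy₀
  set t := c y₀ / g y₀
  have ht : 0 ≤ t := div_nonneg (hc y₀ hy₀.1) hy₀.2.le
  have hc' : ∀ y ∈ s, 0 ≤ c y - t * g y := by
    intro y hy
    rcases le_or_gt (g y) 0 with hgy | hgy
    · nlinarith [hc y hy]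
    · have := hmin y (Finset.mem_filter.2 ⟨hy, hgy⟩)
      rw [le_div_iff₀ hgy] at this
      linarith
  refine ⟨y₀, hy₀.1, mem_hull_finset_iff.2 ⟨fun y => c y - t * g y,
    fun y hy => hc' y (Finset.mem_of_mem_erase hy), ?_⟩⟩
  rw [Finset.sum_erase _ (by simp [t, div_mul_cancel₀ _ hy₀.2.ne'])]
  simp only [sub_smul, Finset.sum_sub_distrib, mul_smul, ← Finset.smul_sum, hg, smul_zero, sub_zero]

variable [TopologicalSpace E] [IsTopologicalAddGroup E] [ContinuousSMul ℝ E] [T2Space E]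

lemma isClosed_hull_range_of_linearIndependent {ι : Type*} [Fintype ι] {v : ι → E}
    (hv : LinearIndependent ℝ v) : IsClosed (hull ℝ (range v) : Set E) := by
  have himage : (hull ℝ (range v) : Set E) = Fintype.linearCombination ℝ v '' Ici 0 := by
    ext x
    simp [mem_hull_range_iff, Fintype.linearCombination_apply, Pi.le_def]
  rw [himage]
  refine (LinearMap.isClosedEmbedding_of_injective ?_).isClosedMap _ isClosed_Ici
  exact LinearMap.ker_eq_bot.2 (linearIndependent_iff_injective_fintypeLinearCombination.1 hv)

theorem isClosed_hull_finset (s : Finset E) : IsClosed (hull ℝ (s : Set E) : Set E) := by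
  classical
  induction s using Finset.strongInduction with
  | H s ih =>
  by_cases hs : LinearIndepOn ℝ id (s : Set E)
  · simpa using isClosed_hull_range_of_linearIndependent hs
  · have hunion : (hull ℝ (s : Set E) : Set E) = ⋃ y ∈ s, (hull ℝ (s.erase y : Set E) : Set E) :=
      Subset.antisymm (fun x hx => by simpa using exists_mem_hull_erase_of_not_linearIndepOn hs hx)
        (iUnion₂_subset fun y _ => Submodule.span_mono (by simp))
    rw [hunion]
    exact isClosed_biUnion_finset fun y hy => ih _ (Finset.erase_ssubset hy)

theorem isClosed_hull_of_finite {s : Set E} (hs : s.Finite) : IsClosed (hull ℝ s : Set E) := by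
  simpa using isClosed_hull_finset hs.toFinset

end PointedCone

section Separation

variable {E : Type*} [NormedAddCommGroup E] [NormedSpace ℝ E] {s t : Set E}

lemma exists_mem_sphere_strict_separation (hs : Convex ℝ s) (hsc : IsCompact s)
    (hsne : s.Nonempty) (ht : Convex ℝ t) (htc : IsClosed t) (hst : Disjoint s t) :
    ∃ p ∈ sphere (0 : StrongDual ℝ E × ℝ) 1,
      (∀ a ∈ s, 0 < p.1 a + p.2) ∧ ∀ b ∈ t, p.1 b + p.2 < 0 := by
  obtain ⟨f, u, v, hfu, huv, hfv⟩ := geometric_hahn_banach_compact_closed hs hsc ht htc hst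
  set q : StrongDual ℝ E × ℝ := (-f, u)
  have hq : ∀ y, q.1 y + q.2 = u - f y := fun y => by simp [q, neg_add_eq_sub]
  obtain ⟨a₀, ha₀⟩ := hsne
  have hq0 : q ≠ 0 := fun h => by
    have := hq a₀
    simp only [h, Prod.fst_zero, Prod.snd_zero, _root_.zero_apply, add_zero] at this
    linarith [hfu a₀ ha₀]
  have hnorm : 0 < ‖q‖⁻¹ := inv_pos.2 (norm_pos_iff.2 hq0)
  have hscale : ∀ y, (‖q‖⁻¹ • q).1 y + (‖q‖⁻¹ • q).2 = ‖q‖⁻¹ * (u - f y) := fun y => by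
    simp [← hq, mul_add]
  refine ⟨‖q‖⁻¹ • q, by simp [norm_smul, hq0], fun a ha => ?_, fun b hb => ?_⟩
  · rw [hscale]; exact mul_pos hnorm (by linarith [hfu a ha])
  · rw [hscale]; exact mul_neg_of_pos_of_neg hnorm (by linarith [hfv b hb])

/-- Strict separators of `t` from the convex hulls of finitely many points of `s`, normalized to
the unit sphere, have a common limit point by compactness. -/
theorem exists_affine_separation [FiniteDimensional ℝ E] (hs : Convex ℝ s) (hsne : s.Nonempty)
    (ht : Convex ℝ t) (htc : IsClosed t) (hst : Disjoint s t) :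
    ∃ p : StrongDual ℝ E × ℝ, p ≠ 0 ∧
      (∀ a ∈ s, 0 ≤ p.1 a + p.2) ∧ ∀ b ∈ t, p.1 b + p.2 ≤ 0 := by
  obtain ⟨a₀, ha₀⟩ := hsne
  set K := sphere (0 : StrongDual ℝ E × ℝ) 1 ∩ ⋂ b ∈ t, {p | p.1 b + p.2 ≤ 0}
  have hK : IsCompact K := (isCompact_sphere _ _).inter_right <|
    isClosed_biInter fun b _ => isClosed_le (by fun_prop) continuous_const
  have hfin : ∀ u : Finset s, (K ∩ ⋂ a ∈ u, {p | 0 ≤ p.1 a + p.2}).Nonempty := by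
    intro u
    set F := insert a₀ ((↑) '' (u : Set s) : Set E)
    have hFs : convexHull ℝ F ⊆ s :=
      convexHull_min (insert_subset ha₀ (by simp [image_subset_iff])) hs
    obtain ⟨p, hp, hpF, hpt⟩ := exists_mem_sphere_strict_separation (convex_convexHull ℝ F)
      (((u.finite_toSet.image _).insert a₀).isCompact_convexHull ℝ)
      ((convexHull_nonempty_iff).2 (insert_nonempty _ _)) ht htc
      (disjoint_of_subset_left hFs hst)
    refine ⟨p, ⟨hp, mem_iInter₂.2 fun b hb => (hpt b hb).le⟩, mem_iInter₂.2 fun a ha => ?_⟩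
    exact (hpF a (subset_convexHull ℝ F (mem_insert_of_mem _ ⟨a, ha, rfl⟩))).le
  obtain ⟨p, ⟨hp, hpt⟩, hps⟩ := hK.inter_iInter_nonempty (fun a : s => {p | 0 ≤ p.1 a + p.2})
    (fun a => isClosed_le continuous_const (by fun_prop)) hfin
  refine ⟨p, ne_zero_of_mem_unit_sphere ⟨p, hp⟩, fun a ha => ?_, fun b hb => ?_⟩
  · exact mem_iInter.1 hps ⟨a, ha⟩
  · exact mem_iInter₂.1 hpt b hb

end Separation

section DotProduct

open PointedCone

variable {n : Type*} [Fintype n]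

lemma exists_dotProduct_eq (f : (n → ℝ) →ₗ[ℝ] ℝ) : ∃ c : n → ℝ, ∀ y, f y = c ⬝ᵥ y := by
  classical
  exact ⟨(dotProductEquiv ℝ n).symm f, fun y => by
    rw [← dotProductEquiv_apply_apply, LinearEquiv.apply_symm_apply]⟩

lemma exists_dotProduct_add_mul (f : (n → ℝ) × ℝ →ₗ[ℝ] ℝ) :
    ∃ (w : n → ℝ) (τ : ℝ), ∀ y t, f (y, t) = w ⬝ᵥ y + t * τ := by
  obtain ⟨w, hw⟩ := exists_dotProduct_eq (f ∘ₗ LinearMap.inl ℝ _ _)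
  refine ⟨w, f (0, 1), fun y t => ?_⟩
  have hyt : (y, t) = (y, 0) + t • ((0 : n → ℝ), (1 : ℝ)) := by simp
  rw [hyt, map_add, map_smul, smul_eq_mul, ← hw]
  rfl

theorem exists_dotProduct_separation {s t : Set (n → ℝ)}
    (hs : Convex ℝ s) (hsne : s.Nonempty) (ht : Convex ℝ t) (htc : IsClosed t)
    (hst : Disjoint s t) :
    ∃ (c : n → ℝ) (c₀ : ℝ), (¬∀ y, c ⬝ᵥ y + c₀ = 0) ∧
      (∀ a ∈ s, 0 ≤ c ⬝ᵥ a + c₀) ∧ ∀ b ∈ t, c ⬝ᵥ b + c₀ ≤ 0 := by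
  obtain ⟨p, hp0, hps, hpt⟩ := exists_affine_separation hs hsne ht htc hst
  obtain ⟨c, hc⟩ := exists_dotProduct_eq p.1.toLinearMap
  simp only [ContinuousLinearMap.coe_coe] at hc
  refine ⟨c, p.2, fun h => hp0 ?_, fun a ha => hc a ▸ hps a ha, fun b hb => hc b ▸ hpt b hb⟩
  have hp2 : p.2 = 0 := by simpa using h 0
  exact Prod.ext (ContinuousLinearMap.ext fun y => by simpa [hc, hp2] using h y) hp2

variable {ι κ : Type*}

def mixedPolyhedron (A : ι → n → ℝ) (α : ι → ℝ) (B : κ → n → ℝ) (β : κ → ℝ) : Set (n → ℝ) :=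
  {y | (∀ i, 0 ≤ A i ⬝ᵥ y - α i) ∧ (∀ j, 0 < B j ⬝ᵥ y - β j)}

variable {A : ι → n → ℝ} {α : ι → ℝ} {B : κ → n → ℝ} {β : κ → ℝ} {c : n → ℝ} {c₀ : ℝ}

lemma convex_mixedPolyhedron : Convex ℝ (mixedPolyhedron A α B β) := by
  have hlin : ∀ a : n → ℝ, IsLinearMap ℝ (a ⬝ᵥ ·) := fun a =>
    ⟨dotProduct_add a, fun r y => dotProduct_smul r a y⟩
  have hset : mixedPolyhedron A α B β =
      (⋂ i, {y | α i ≤ A i ⬝ᵥ y}) ∩ ⋂ j, {y | β j < B j ⬝ᵥ y} := by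
    ext y
    simp [mixedPolyhedron, sub_nonneg, sub_pos]
  rw [hset]
  exact (convex_iInter fun i => convex_halfSpace_ge (hlin _) _).inter
    (convex_iInter fun j => convex_halfSpace_gt (hlin _) _)

/-- The hypotheses on `(w, τ)` put it in the closure of the homogenization of the polyhedron: the
points `(τ + r)⁻¹ • (w + r • y₁)`, `r > 0`, lie in the polyhedron itself. -/
lemma dotProduct_add_mul_nonneg_of_homogeneous
    (hL : ∀ y ∈ mixedPolyhedron A α B β, 0 ≤ c ⬝ᵥ y + c₀)
    {y₁ : n → ℝ} (hy₁ : y₁ ∈ mixedPolyhedron A α B β) {w : n → ℝ} {τ : ℝ} (hτ : 0 ≤ τ)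
    (hA : ∀ i, 0 ≤ A i ⬝ᵥ w - τ * α i) (hB : ∀ j, 0 ≤ B j ⬝ᵥ w - τ * β j) :
    0 ≤ c ⬝ᵥ w + τ * c₀ := by
  have hK : 0 ≤ c ⬝ᵥ y₁ + c₀ := hL y₁ hy₁
  have key : ∀ r > 0, 0 ≤ c ⬝ᵥ w + τ * c₀ + r * (c ⬝ᵥ y₁ + c₀) := by
    intro r hr
    have hpos : 0 < (τ + r)⁻¹ := by positivity
    have hy : ∀ (a : n → ℝ) (a₀ : ℝ), a ⬝ᵥ ((τ + r)⁻¹ • (w + r • y₁)) - a₀ =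
        (τ + r)⁻¹ * (a ⬝ᵥ w - τ * a₀ + r * (a ⬝ᵥ y₁ - a₀)) := by
      intro a a₀
      simp only [dotProduct_smul, dotProduct_add, smul_eq_mul]
      field_simp
      ring
    have hmem : (τ + r)⁻¹ • (w + r • y₁) ∈ mixedPolyhedron A α B β := by
      refine ⟨fun i => ?_, fun j => ?_⟩
      · rw [hy]
        exact mul_nonneg hpos.le (add_nonneg (hA i) (mul_nonneg hr.le (hy₁.1 i)))
      · rw [hy]
        exact mul_pos hpos (add_pos_of_nonneg_of_pos (hB j) (mul_pos hr (hy₁.2 j)))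
    have := hL _ hmem
    rw [← sub_neg_eq_add, hy, mul_nonneg_iff_of_pos_left hpos] at this
    linarith
  refine le_of_forall_pos_le_add fun ε hε => ?_
  have hr := key (ε / (c ⬝ᵥ y₁ + c₀ + 1)) (by positivity)
  have hle : ε / (c ⬝ᵥ y₁ + c₀ + 1) * (c ⬝ᵥ y₁ + c₀) ≤ ε := by
    rw [div_mul_eq_mul_div, div_le_iff₀ (by positivity)]
    nlinarith
  linarith

/-- Otherwise a functional `(w, τ)` separates `(c, c₀)` from the closed cone generated by the
`(Aᵢ, -αᵢ)`, `(Bⱼ, -βⱼ)` and `(0, 1)`, against `dotProduct_add_mul_nonneg_of_homogeneous`. -/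
theorem exists_nonneg_combination_of_nonneg_on_mixedPolyhedron [Fintype ι] [Fintype κ]
    (hne : (mixedPolyhedron A α B β).Nonempty)
    (hL : ∀ y ∈ mixedPolyhedron A α B β, 0 ≤ c ⬝ᵥ y + c₀) :
    ∃ (δ : ι → ℝ) (ε : κ → ℝ) (δ₀ : ℝ), (∀ i, 0 ≤ δ i) ∧ (∀ j, 0 ≤ ε j) ∧ 0 ≤ δ₀ ∧
      ∀ y, c ⬝ᵥ y + c₀ =
        ∑ i, δ i * (A i ⬝ᵥ y - α i) + ∑ j, ε j * (B j ⬝ᵥ y - β j) + δ₀ := by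
  classical
  set g : Option (ι ⊕ κ) → (n → ℝ) × ℝ :=
    fun k => k.elim (0, 1) (Sum.elim (fun i => (A i, -α i)) (fun j => (B j, -β j)))
  let C : ProperCone ℝ ((n → ℝ) × ℝ) := ⟨hull ℝ (range g), isClosed_hull_of_finite (finite_range g)⟩
  have hmem : (c, c₀) ∈ C := by
    by_contra hc
    obtain ⟨f, hfC, hfc⟩ := C.hyperplane_separation_point hc
    obtain ⟨w, τ, hf⟩ := exists_dotProduct_add_mul f.toLinearMap
    simp only [ContinuousLinearMap.coe_coe] at hf
    have hg : ∀ k, 0 ≤ f (g k) := fun k => hfC _ (subset_hull (mem_range_self k))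
    have := dotProduct_add_mul_nonneg_of_homogeneous hL hne.some_mem (w := w) (τ := τ)
      (by simpa [g, hf] using hg none)
      (fun i => by
        simpa [g, hf, dotProduct_comm, mul_comm, ← sub_eq_add_neg] using hg (some (.inl i)))
      (fun j => by
        simpa [g, hf, dotProduct_comm, mul_comm, ← sub_eq_add_neg] using hg (some (.inr j)))
    rw [hf, dotProduct_comm, mul_comm] at hfc
    linarith
  obtain ⟨r, hr, hrc⟩ := mem_hull_range_iff.1 hmem
  refine ⟨fun i => r (some (.inl i)), fun j => r (some (.inr j)), r none,
    fun i => hr _, fun j => hr _, hr _, fun y => ?_⟩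
  have := congrArg (fun p : (n → ℝ) × ℝ => p.1 ⬝ᵥ y + p.2) hrc
  simp only [Fintype.sum_option, Fintype.sum_sum_type, g, Option.elim_none, Option.elim_some,
    Sum.elim_inl, Sum.elim_inr, Prod.fst_add, Prod.snd_add, Prod.fst_sum, Prod.snd_sum,
    Prod.smul_fst, Prod.smul_snd, add_dotProduct, sum_dotProduct, smul_dotProduct, smul_eq_mul,
    zero_dotProduct] at this
  rw [← this]
  simp only [mul_sub, mul_neg, Finset.sum_sub_distrib, Finset.sum_neg_distrib]
  ring

end DotProduct

lemma sum_mul_add_pos {κ : Type*} [Fintype κ] {ε x : κ → ℝ} {δ₀ : ℝ} (hε : ∀ j, 0 ≤ ε j)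
    (hδ₀ : 0 ≤ δ₀) (hx : ∀ j, 0 < x j) (h : ¬(ε = 0 ∧ δ₀ = 0)) : 0 < ∑ j, ε j * x j + δ₀ := by
  have hterm : ∀ j ∈ Finset.univ, 0 ≤ ε j * x j := fun j _ => mul_nonneg (hε j) (hx j).le
  rcases hδ₀.lt_or_eq with hδ₀ | rfl
  · linarith [Finset.sum_nonneg hterm]
  · obtain ⟨j, hj⟩ : ∃ j, ε j ≠ 0 := by
      by_contra! h'
      exact h ⟨funext h', rfl⟩
    simpa using Finset.sum_pos' hterm ⟨j, Finset.mem_univ _, mul_pos ((hε j).lt_of_ne' hj) (hx j)⟩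

theorem separation_nonneg_combination_general (m r s : ℕ)
    (A : Fin r → Fin m → ℝ) (α : Fin r → ℝ)
    (B : Fin s → Fin m → ℝ) (β : Fin s → ℝ)
    (𝒜 ℬ : Set (Fin m → ℝ))
    (h𝒜 : 𝒜 = {y | (∀ i, 0 ≤ A i ⬝ᵥ y - α i) ∧ (∀ j, 0 < B j ⬝ᵥ y - β j)})
    (h𝒜ne : 𝒜.Nonempty)
    (hℬclosed : IsClosed ℬ) (hℬconvex : Convex ℝ ℬ)
    (hdisj : 𝒜 ∩ ℬ = ∅)
    (hnoL : ¬ ∃ (c : Fin m → ℝ) (c₀ : ℝ),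
        (∀ y ∈ 𝒜, 0 < c ⬝ᵥ y + c₀) ∧ (∀ y ∈ ℬ, c ⬝ᵥ y + c₀ ≤ 0)) :
    ∃ (c : Fin m → ℝ) (c₀ : ℝ) (δ : Fin r → ℝ),
      (∀ i, 0 ≤ δ i) ∧
      (¬ ∀ y : Fin m → ℝ, c ⬝ᵥ y + c₀ = 0) ∧
      (∀ y : Fin m → ℝ, c ⬝ᵥ y + c₀ = ∑ i, δ i * (A i ⬝ᵥ y - α i)) ∧
      (∀ y ∈ ℬ, c ⬝ᵥ y + c₀ ≤ 0) := by
  subst h𝒜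
  obtain ⟨c, c₀, hL0, hL𝒜, hLℬ⟩ := exists_dotProduct_separation convex_mixedPolyhedron h𝒜ne
    hℬconvex hℬclosed (disjoint_iff_inter_eq_empty.2 hdisj)
  obtain ⟨δ, ε, δ₀, hδ, hε, hδ₀, hL⟩ :=
    exists_nonneg_combination_of_nonneg_on_mixedPolyhedron h𝒜ne hL𝒜
  obtain ⟨rfl, rfl⟩ : ε = 0 ∧ δ₀ = 0 := by
    by_contra h
    refine hnoL ⟨c, c₀, fun y hy => ?_, hLℬ⟩
    rw [hL y, add_assoc]
    exact add_pos_of_nonneg_of_pos (Finset.sum_nonneg fun i _ => mul_nonneg (hδ i) (hy.1 i))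
      (sum_mul_add_pos hε hδ₀ hy.2 h)
  exact ⟨c, c₀, δ, hδ, hL0, fun y => by simpa using hL y, hLℬ⟩

/-- Separation lemma: if the nonempty set `𝒜` defined by the affine
inequalities `Aᵢ·y − αᵢ ≥ 0`, `Bⱼ·y − βⱼ > 0` and the nonempty closed convex
set `ℬ` are disjoint, and no affine function is positive on `𝒜` and
nonpositive on `ℬ`, then some affine function `L₀ ≢ 0` that is a nonnegative
combination of the `Aᵢ·y − αᵢ` is nonpositive on `ℬ`. -/
theorem separation_nonneg_combination (m r s : ℕ)
    (A : Fin r → Fin m → ℝ) (α : Fin r → ℝ)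
    (B : Fin s → Fin m → ℝ) (β : Fin s → ℝ)
    (𝒜 ℬ : Set (Fin m → ℝ))
    (h𝒜 : 𝒜 = {y | (∀ i, 0 ≤ A i ⬝ᵥ y - α i) ∧ (∀ j, 0 < B j ⬝ᵥ y - β j)})
    (h𝒜ne : 𝒜.Nonempty) (hℬne : ℬ.Nonempty)
    (hℬclosed : IsClosed ℬ) (hℬconvex : Convex ℝ ℬ)
    (hdisj : 𝒜 ∩ ℬ = ∅)
    (hnoL : ¬ ∃ (c : Fin m → ℝ) (c₀ : ℝ),
        (∀ y ∈ 𝒜, 0 < c ⬝ᵥ y + c₀) ∧ (∀ y ∈ ℬ, c ⬝ᵥ y + c₀ ≤ 0)) :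
    ∃ (c : Fin m → ℝ) (c₀ : ℝ) (δ : Fin r → ℝ),
      (∀ i, 0 ≤ δ i) ∧
      (¬ ∀ y : Fin m → ℝ, c ⬝ᵥ y + c₀ = 0) ∧
      (∀ y : Fin m → ℝ, c ⬝ᵥ y + c₀ = ∑ i, δ i * (A i ⬝ᵥ y - α i)) ∧
      (∀ y ∈ ℬ, c ⬝ᵥ y + c₀ ≤ 0) :=
  separation_nonneg_combination_general m r s A α B β 𝒜 ℬ h𝒜 h𝒜ne hℬclosed hℬconvex hdisj hnoL
end

section
/- (Generalization of Motzkin's theorem to concave quadratic inequalities.) Let f₁,…,f_r and g₁,…,g_s be concave quadratic polynomials on ℝⁿ such that K = {x ∈ ℝⁿ : f₁(x) ≥ 0, …, f_r(x) ≥ 0, g₁(x) > 0, …, g_s(x) > 0} is empty, and suppose the NSOSC condition holds for f₁,…,f_r. Then there exist λ₁,…,λ_r ≥ 0, η₀,η₁,…,η_s ≥ 0 and a polynomial h of degree at most 2 that is a sum of squares, such that Σ_{i=1}^r λ_i f_i + Σ_{j=1}^s η_j g_j + η₀ + h is identically zero, and η₀ + η₁ + ⋯ + η_s = 1. -/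
open Matrix MvPolynomial

/-- A polynomial is a sum of squares. -/
def IsSOS {σ : Type*} (p : MvPolynomial σ ℝ) : Prop :=
  ∃ (k : ℕ) (q : Fin k → MvPolynomial σ ℝ), p = ∑ i, (q i) ^ 2

/-- A polynomial is concave quadratic (CQ): it has total degree at most 2,
`p(x) = xᵀAx + bᵀx + c` with `A` symmetric negative semidefinite. -/
def IsCQ {σ : Type*} [Fintype σ] (p : MvPolynomial σ ℝ) : Prop :=
  ∃ (A : Matrix σ σ ℝ) (b : σ → ℝ) (c : ℝ), IsNegSemidef A ∧
    p = (∑ i, ∑ j, MvPolynomial.C (A i j) * MvPolynomial.X i * MvPolynomial.X j)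
        + (∑ i, MvPolynomial.C (b i) * MvPolynomial.X i) + MvPolynomial.C c


/-!
Separating the open positive orthant from the set `{y | ∃ x, y ≤ (f x, g x)}`, which is convex
because the `fᵢ, gⱼ` are concave, gives weights `λ, η ≥ 0`, not all zero, with
`∑ λᵢ fᵢ + ∑ ηⱼ gⱼ ≤ 0`. If some `ηⱼ > 0`, normalising gives the certificate, and `h` is minus
this nonpositive quadratic, an SOS because a nonnegative quadratic is one. Otherwise
`∑ λᵢ fᵢ ≤ 0`, so `∑ λᵢ fᵢ ≡ 0` by NSOSC and every `fᵢ` with `λᵢ > 0` is affine. If these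
affine `fᵢ` have no common zero, a combination of them is `-1` (Farkas). Otherwise we restrict
everything to their common zero set `L` through an affine retraction and induct on the number of
`fᵢ`. A concave quadratic that is nonpositive on `L` is bounded above by a combination of the
equations of `L` (at a critical point on `L` its gradient is normal to `L`); this carries NSOSC
down to `L` and the certificate back up.
-/

section QuadraticFunctions

variable {m : Type*} [Fintype m]

noncomputable def quadFun (A : Matrix m m ℝ) (b : m → ℝ) (c : ℝ) (x : m → ℝ) : ℝ :=
  x ⬝ᵥ A *ᵥ x + b ⬝ᵥ x + c

def IsCQFun (F : (m → ℝ) → ℝ) : Prop :=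
  ∃ (A : Matrix m m ℝ) (b : m → ℝ) (c : ℝ), IsNegSemidef A ∧ F = quadFun A b c

theorem dotProduct_mulVec_comm_of_isSymm {A : Matrix m m ℝ} (hA : A.IsSymm) (x y : m → ℝ) :
    x ⬝ᵥ A *ᵥ y = y ⬝ᵥ A *ᵥ x := by
  rw [dotProduct_mulVec, ← hA, vecMul_transpose, dotProduct_comm, hA]

theorem smul_dotProduct_mulVec_smul (A : Matrix m m ℝ) (t : ℝ) (x : m → ℝ) :
    (t • x) ⬝ᵥ A *ᵥ (t • x) = t ^ 2 * (x ⬝ᵥ A *ᵥ x) := by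
  simp only [mulVec_smul, dotProduct_smul, smul_dotProduct, smul_eq_mul]
  ring

theorem quadFun_add {A : Matrix m m ℝ} (hA : A.IsSymm) (b : m → ℝ) (c : ℝ) (x d : m → ℝ) :
    quadFun A b c (x + d) = quadFun A b c x + ((2 : ℝ) • (A *ᵥ x) + b) ⬝ᵥ d + d ⬝ᵥ A *ᵥ d := by
  simp only [quadFun, mulVec_add, dotProduct_add, add_dotProduct, smul_dotProduct, smul_eq_mul]
  rw [dotProduct_comm (A *ᵥ x), dotProduct_mulVec_comm_of_isSymm hA d x]
  ring

theorem IsNegSemidef.add {A B : Matrix m m ℝ} (hA : IsNegSemidef A) (hB : IsNegSemidef B) :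
    IsNegSemidef (A + B) :=
  ⟨hA.1.add hB.1, fun x => by simpa [add_mulVec] using add_nonpos (hA.2 x) (hB.2 x)⟩

theorem IsNegSemidef.smul {A : Matrix m m ℝ} (hA : IsNegSemidef A) {t : ℝ} (ht : 0 ≤ t) :
    IsNegSemidef (t • A) :=
  ⟨hA.1.smul t, fun x => by
    simpa [smul_mulVec, dotProduct_smul] using mul_nonpos_of_nonneg_of_nonpos ht (hA.2 x)⟩

theorem isNegSemidef_zero : IsNegSemidef (0 : Matrix m m ℝ) :=
  ⟨isSymm_zero, fun x => by simp⟩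

theorem IsNegSemidef.transpose_mul_mul {A : Matrix m m ℝ} (hA : IsNegSemidef A)
    (M : Matrix m m ℝ) : IsNegSemidef (Mᵀ * A * M) := by
  refine ⟨?_, fun x => ?_⟩
  · simp only [IsSymm, transpose_mul, transpose_transpose, hA.1.eq, Matrix.mul_assoc]
  · rw [← mulVec_mulVec, ← mulVec_mulVec, dotProduct_mulVec, vecMul_transpose]
    exact hA.2 _

theorem IsCQFun.add {F G : (m → ℝ) → ℝ} (hF : IsCQFun F) (hG : IsCQFun G) :
    IsCQFun fun x => F x + G x := by
  obtain ⟨A, b, c, hA, rfl⟩ := hF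
  obtain ⟨A', b', c', hA', rfl⟩ := hG
  refine ⟨A + A', b + b', c + c', hA.add hA', funext fun x => ?_⟩
  simp only [quadFun, add_mulVec, dotProduct_add, add_dotProduct]
  ring

theorem IsCQFun.const_mul {F : (m → ℝ) → ℝ} (hF : IsCQFun F) {t : ℝ} (ht : 0 ≤ t) :
    IsCQFun fun x => t * F x := by
  obtain ⟨A, b, c, hA, rfl⟩ := hF
  refine ⟨t • A, t • b, t * c, hA.smul ht, funext fun x => ?_⟩
  simp only [quadFun, smul_mulVec, dotProduct_smul, smul_dotProduct, smul_eq_mul]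
  ring

theorem isCQFun_const (c : ℝ) : IsCQFun fun _ : m → ℝ => c :=
  ⟨0, 0, c, isNegSemidef_zero, funext fun x => by simp [quadFun]⟩

theorem isCQFun_sum_mul {ι : Type*} [Fintype ι] {F : ι → (m → ℝ) → ℝ}
    (hF : ∀ i, IsCQFun (F i)) {w : ι → ℝ} (hw : ∀ i, 0 ≤ w i) :
    IsCQFun fun x => ∑ i, w i * F i x := by
  have h : IsCQFun (∑ i, w i • F i) :=
    Finset.sum_induction _ IsCQFun (fun _ _ => IsCQFun.add) (isCQFun_const 0)
      fun i _ => (hF i).const_mul (hw i)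
  simpa [Finset.sum_fn] using h

theorem IsCQFun.comp_affine {F : (m → ℝ) → ℝ} (hF : IsCQFun F) (π : (m → ℝ) →ₗ[ℝ] m → ℝ)
    (w : m → ℝ) : IsCQFun fun x => F (π x + w) := by
  classical
  obtain ⟨A, b, c, hA, rfl⟩ := hF
  obtain ⟨M, hM⟩ : ∃ M : Matrix m m ℝ, ∀ x, π x = M *ᵥ x :=
    ⟨_, fun x => (LinearMap.toMatrix'_mulVec π x).symm⟩
  refine ⟨Mᵀ * A * M, Mᵀ *ᵥ ((2 : ℝ) • (A *ᵥ w) + b), quadFun A b c w,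
    hA.transpose_mul_mul M, funext fun x => ?_⟩
  have hT : ∀ v, (Mᵀ *ᵥ v) ⬝ᵥ x = v ⬝ᵥ M *ᵥ x := fun v => by
    rw [dotProduct_comm, dotProduct_mulVec, vecMul_transpose, dotProduct_comm]
  rw [hM, add_comm, quadFun_add hA.1]
  simp only [quadFun, ← mulVec_mulVec, hT, dotProduct_mulVec x Mᵀ, vecMul_transpose]
  ring

theorem IsCQFun.concaveOn {F : (m → ℝ) → ℝ} (hF : IsCQFun F) : ConcaveOn ℝ Set.univ F := by
  obtain ⟨A, b, c, hA, rfl⟩ := hF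
  refine ⟨convex_univ, fun x _ y _ s t hs ht hst => ?_⟩
  obtain rfl : t = 1 - s := by linarith
  have hxy : s • x + (1 - s) • y = y + s • (x - y) := by module
  have hx : x = y + (x - y) := by abel
  rw [hxy, quadFun_add hA.1, smul_dotProduct_mulVec_smul, dotProduct_smul, smul_eq_mul,
    smul_eq_mul, smul_eq_mul, hx, quadFun_add hA.1, ← hx]
  -- the defect of concavity is `-s (1 - s) (x - y)ᵀ A (x - y) ≥ 0`
  nlinarith [mul_nonpos_of_nonneg_of_nonpos (mul_nonneg hs ht) (hA.2 (x - y))]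

end QuadraticFunctions

section Polynomials

variable {m : Type*} [Fintype m]

noncomputable def quadPoly (A : Matrix m m ℝ) (b : m → ℝ) (c : ℝ) : MvPolynomial m ℝ :=
  (∑ i, ∑ j, C (A i j) * X i * X j) + (∑ i, C (b i) * X i) + C c

theorem eval_quadPoly (A : Matrix m m ℝ) (b : m → ℝ) (c : ℝ) (x : m → ℝ) :
    eval x (quadPoly A b c) = quadFun A b c x := by
  simp only [quadPoly, quadFun, map_add, map_sum, map_mul, eval_C, eval_X, dotProduct,
    mulVec, Finset.mul_sum]
  congr 2
  exact Finset.sum_congr rfl fun i _ => Finset.sum_congr rfl fun j _ => by ring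

theorem totalDegree_quadPoly_le (A : Matrix m m ℝ) (b : m → ℝ) (c : ℝ) :
    (quadPoly A b c).totalDegree ≤ 2 := by
  have hX : ∀ (a : ℝ) (i : m), (C a * X i : MvPolynomial m ℝ).totalDegree ≤ 1 := fun a i =>
    (totalDegree_mul _ _).trans (by simp)
  refine (totalDegree_add _ _).trans (max_le ((totalDegree_add _ _).trans (max_le ?_ ?_)) ?_)
  · refine (totalDegree_finsetSum _ _).trans (Finset.sup_le fun i _ => ?_)
    refine (totalDegree_finsetSum _ _).trans (Finset.sup_le fun j _ => ?_)
    exact (totalDegree_mul _ _).trans (add_le_add (hX _ _) (totalDegree_X j).le)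
  · exact (totalDegree_finsetSum _ _).trans
      (Finset.sup_le fun i _ => (hX _ _).trans one_le_two)
  · simp

theorem IsCQ.isCQFun_eval {p : MvPolynomial m ℝ} (hp : IsCQ p) : IsCQFun fun x => eval x p := by
  obtain ⟨A, b, c, hA, rfl⟩ := hp
  exact ⟨A, b, c, hA, funext (eval_quadPoly A b c)⟩

theorem isSOS_sum_sq {ι σ : Type*} [Fintype ι] (q : ι → MvPolynomial σ ℝ) :
    IsSOS (∑ i, q i ^ 2) :=
  ⟨Fintype.card ι, q ∘ (Fintype.equivFin ι).symm,
    (Equiv.sum_comp (Fintype.equivFin ι).symm fun i => q i ^ 2).symm⟩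

theorem nonneg_of_forall_quadratic_nonneg {a b c : ℝ} (h : ∀ s : ℝ, 0 ≤ a * s ^ 2 + b * s + c) :
    0 ≤ a := by
  have hd := discrim_le_zero (K := ℝ) (a := a) (b := b) (c := c) fun s => by
    rw [← sq]; exact h s
  rw [discrim] at hd
  nlinarith [h 0, h 1, h (-1)]

noncomputable def homogenization (A : Matrix m m ℝ) (b : m → ℝ) (c : ℝ) :
    Matrix (Unit ⊕ m) (Unit ⊕ m) ℝ :=
  fromBlocks (of fun _ _ => c) (of fun _ j => b j / 2) (of fun i _ => b i / 2) A

theorem sumElim_dotProduct_homogenization_mulVec (A : Matrix m m ℝ) (b : m → ℝ) (c t : ℝ)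
    (y : m → ℝ) :
    Sum.elim (fun _ => t) y ⬝ᵥ homogenization A b c *ᵥ Sum.elim (fun _ => t) y
      = t ^ 2 * c + t * (b ⬝ᵥ y) + y ⬝ᵥ A *ᵥ y := by
  rw [homogenization, fromBlocks_mulVec, sumElim_dotProduct_sumElim]
  simp only [dotProduct, mulVec, Sum.elim_comp_inl, Sum.elim_comp_inr, of_apply,
    Fintype.sum_unique, Pi.add_apply, mul_add, Finset.sum_add_distrib, Finset.mul_sum]
  have hb : ∑ i, t * (b i / 2 * y i) + ∑ i, y i * (b i / 2 * t) = ∑ i, t * (b i * y i) := by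
    rw [← Finset.sum_add_distrib]
    exact Finset.sum_congr rfl fun i _ => by ring
  linear_combination hb

theorem posSemidef_homogenization {A : Matrix m m ℝ} (hA : A.IsSymm) {b : m → ℝ} {c : ℝ}
    (h : ∀ x, 0 ≤ quadFun A b c x) : (homogenization A b c).PosSemidef := by
  rw [posSemidef_iff_dotProduct_mulVec]
  refine ⟨?_, fun v => ?_⟩
  · exact IsHermitian.fromBlocks (by ext; simp) (by ext; simp) (isHermitian_iff_isSymm.2 hA)
  rw [star_trivial, ← Sum.elim_comp_inl_inr v]
  have hv : v ∘ Sum.inl = fun _ => v (Sum.inl ()) := funext fun _ => rfl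
  rw [hv, sumElim_dotProduct_homogenization_mulVec]
  set t := v (Sum.inl ())
  set y := v ∘ Sum.inr
  rcases eq_or_ne t 0 with ht | ht
  · have hy : 0 ≤ y ⬝ᵥ A *ᵥ y :=
      nonneg_of_forall_quadratic_nonneg (b := b ⬝ᵥ y) (c := c) fun s => by
        have := h (s • y)
        rw [quadFun, smul_dotProduct_mulVec_smul, dotProduct_smul, smul_eq_mul] at this
        linarith
    simpa [ht] using hy
  · have := mul_nonneg (sq_nonneg t) (h (t⁻¹ • y))
    rw [quadFun, smul_dotProduct_mulVec_smul, dotProduct_smul, smul_eq_mul] at this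
    convert this using 1
    field_simp
    ring

theorem isSOS_quadPoly {A : Matrix m m ℝ} (hA : A.IsSymm) {b : m → ℝ} {c : ℝ}
    (h : ∀ x, 0 ≤ quadFun A b c x) : IsSOS (quadPoly A b c) := by
  classical
  obtain ⟨B, hB⟩ : ∃ B, homogenization A b c = star B * B := by
    open scoped Matrix.Norms.L2Operator MatrixOrder in
    exact CStarAlgebra.nonneg_iff_eq_star_mul_self.mp (posSemidef_homogenization hA h).nonneg
  let q : Unit ⊕ m → MvPolynomial m ℝ := fun k =>
    C (B k (Sum.inl ())) + ∑ i, C (B k (Sum.inr i)) * X i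
  convert isSOS_sum_sq q
  refine MvPolynomial.funext fun x => ?_
  have hv := sumElim_dotProduct_homogenization_mulVec A b c 1 x
  set v : Unit ⊕ m → ℝ := Sum.elim (fun _ => 1) x
  rw [hB, star_eq_conjTranspose, conjTranspose_eq_transpose_of_trivial, ← mulVec_mulVec,
    dotProduct_mulVec, vecMul_transpose, one_pow, one_mul, one_mul] at hv
  have hq : ∀ k, eval x (q k) = (B *ᵥ v) k := fun k => by
    simp [q, v, mulVec, dotProduct, Fintype.sum_sum_type]
  have hsq : (B *ᵥ v) ⬝ᵥ (B *ᵥ v) = ∑ k, (B *ᵥ v) k ^ 2 := by simp only [dotProduct, sq]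
  simp only [eval_quadPoly, map_sum, map_pow, hq, quadFun]
  linarith

theorem isSOS_and_totalDegree_le_of_nonneg {p : MvPolynomial m ℝ}
    (hp : IsCQFun fun x => -eval x p) (h : ∀ x, 0 ≤ eval x p) :
    IsSOS p ∧ p.totalDegree ≤ 2 := by
  obtain ⟨A, b, c, hA, hpA⟩ := hp
  have hq : ∀ x, eval x p = quadFun (-A) (-b) (-c) x := fun x => by
    have := congrFun hpA x
    simp only [quadFun, neg_mulVec, dotProduct_neg, neg_dotProduct] at this ⊢
    linarith
  obtain rfl : p = quadPoly (-A) (-b) (-c) :=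
    MvPolynomial.funext fun x => by rw [hq, eval_quadPoly]
  exact ⟨isSOS_quadPoly hA.1.neg fun x => hq x ▸ h x, totalDegree_quadPoly_le _ _ _⟩

end Polynomials

section Alternatives

variable {E : Type*} [AddCommGroup E] [Module ℝ E]

theorem exists_nonneg_sum_mul_nonpos_of_concaveOn {ι : Type*} [Fintype ι] {Φ : ι → E → ℝ}
    (hΦ : ∀ i, ConcaveOn ℝ Set.univ (Φ i)) (h : ¬ ∃ x, ∀ i, 0 < Φ i x) :
    ∃ w : ι → ℝ, (∀ i, 0 ≤ w i) ∧ w ≠ 0 ∧ ∀ x, ∑ i, w i * Φ i x ≤ 0 := by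
  classical
  -- separate the open positive orthant from the convex set of points dominated by some `Φ x`
  set O : Set (ι → ℝ) := Set.univ.pi fun _ => Set.Ioi 0
  set D : Set (ι → ℝ) := {y | ∃ x, y ≤ fun i => Φ i x}
  have hDc : Convex ℝ D := by
    rintro _ ⟨x, hx⟩ _ ⟨x', hx'⟩ a b ha hb hab
    refine ⟨a • x + b • x', fun i => ?_⟩
    calc _ ≤ a * Φ i x + b * Φ i x' :=
          add_le_add (mul_le_mul_of_nonneg_left (hx i) ha) (mul_le_mul_of_nonneg_left (hx' i) hb)
      _ ≤ Φ i (a • x + b • x') := (hΦ i).2 trivial trivial ha hb hab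
  have hOD : Disjoint O D := Set.disjoint_left.2 fun y hy ⟨x, hx⟩ =>
    h ⟨x, fun i => (hy i trivial).trans_le (hx i)⟩
  obtain ⟨f, u, hfO, hfD⟩ := geometric_hahn_banach_open (convex_pi fun _ _ => convex_Ioi 0)
    (isOpen_set_pi Set.finite_univ fun _ _ => isOpen_Ioi) hDc hOD
  have hcl : ∀ y : ι → ℝ, (∀ i, 0 ≤ y i) → f y ≤ u := fun y hy =>
    closure_minimal (fun y hy => (hfO y hy).le) (isClosed_le f.continuous continuous_const)
      (by rw [closure_pi_set, closure_Ioi]; exact fun i _ => hy i)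
  set w : ι → ℝ := fun i => -f fun j => if i = j then 1 else 0
  have hf : ∀ y, f y = -∑ i, w i * y i := fun y => by
    rw [← f.coe_coe, f.toLinearMap.pi_apply_eq_sum_univ]
    simp [w, mul_comm]
  refine ⟨w, fun i => ?_, fun hw => ?_, fun x => ?_⟩
  · have hle : ∀ t : ℝ, 0 ≤ t → -(t * w i) ≤ u := fun t ht => by
      have := hcl (t • fun j => if i = j then 1 else 0) fun j => by
        by_cases hij : i = j <;> simp [hij, ht]
      rwa [map_smul, smul_eq_mul, ← neg_neg (f _), mul_neg] at this
    by_contra! hw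
    have := hle ((|u| + 1) / -w i) (div_nonneg (by positivity) (neg_nonneg.2 hw.le))
    rw [div_mul_eq_mul_div, div_neg, neg_neg, mul_div_assoc, div_self hw.ne, mul_one] at this
    linarith [le_abs_self u]
  · have h1 := hfO (fun _ => 1) fun _ _ => Set.mem_Ioi.2 one_pos
    have h2 := hfD _ ⟨0, le_rfl⟩
    simp only [hf, hw, Pi.zero_apply, zero_mul, Finset.sum_const_zero, neg_zero] at h1 h2
    linarith
  · have h1 := hfD _ ⟨x, le_rfl⟩
    have h2 := hcl 0 fun _ => le_rfl
    rw [hf] at h1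
    rw [map_zero] at h2
    linarith

end Alternatives

section AffineFunctions

variable {E : Type*} [AddCommGroup E] [Module ℝ E]

def IsAffineFun (ℓ : E → ℝ) : Prop :=
  ∃ (φ : E →ₗ[ℝ] ℝ) (c : ℝ), ℓ = fun x => φ x + c

theorem exists_sum_mul_eq_neg_one_of_isAffineFun {ι : Type*} [Fintype ι] {ℓ : ι → E → ℝ}
    (hℓ : ∀ i, IsAffineFun (ℓ i)) (h : ¬ ∃ x, ∀ i, ℓ i x = 0) :
    ∃ d : ι → ℝ, ∀ x, ∑ i, d i * ℓ i x = -1 := by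
  choose φ c hℓ using hℓ
  obtain rfl : ℓ = fun i x => φ i x + c i := funext hℓ
  -- homogenize: on `E × ℝ` the forms `(x, t) ↦ φᵢ x + t cᵢ` have no common zero with `t ≠ 0`
  let L : ι → E × ℝ →ₗ[ℝ] ℝ := fun i => φ i ∘ₗ LinearMap.fst ℝ E ℝ + c i • LinearMap.snd ℝ E ℝ
  have hker : ⨅ i, LinearMap.ker (L i) ≤ LinearMap.ker (LinearMap.snd ℝ E ℝ) := by
    rintro ⟨x, t⟩ hx
    simp only [Submodule.mem_iInf, LinearMap.mem_ker] at hx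
    by_contra (ht : t ≠ 0)
    refine h ⟨t⁻¹ • x, fun i => ?_⟩
    have := hx i
    simp only [L, LinearMap.add_apply, LinearMap.coe_comp, Function.comp_apply,
      LinearMap.fst_apply, LinearMap.smul_apply, LinearMap.snd_apply, smul_eq_mul] at this
    show φ i (t⁻¹ • x) + c i = 0
    rw [map_smul, smul_eq_mul, show c i = t⁻¹ * (c i * t) by field_simp, ← mul_add, this,
      mul_zero]
  obtain ⟨d, hd⟩ := (Submodule.mem_span_range_iff_exists_fun ℝ).1
    (mem_span_of_iInf_ker_le_ker hker)
  refine ⟨-d, fun x => ?_⟩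
  have h1 := LinearMap.congr_fun hd (x, 0)
  have h2 := LinearMap.congr_fun hd (0, 1)
  simp only [L, smul_add, LinearMap.coe_sum, Finset.sum_apply, LinearMap.add_apply,
    LinearMap.smul_apply, LinearMap.coe_comp, LinearMap.coe_fst, Function.comp_apply, smul_eq_mul,
    LinearMap.snd_apply, mul_zero, add_zero, map_zero, mul_one, zero_add] at h1 h2
  simp only [Pi.neg_apply, neg_mul, Finset.sum_neg_distrib, mul_add, Finset.sum_add_distrib, h1,
    h2]
  norm_num

theorem exists_affine_retraction {ι : Type*} {ℓ : ι → E → ℝ} (hℓ : ∀ i, IsAffineFun (ℓ i))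
    {x₀ : E} (hx₀ : ∀ i, ℓ i x₀ = 0) :
    ∃ (π : E →ₗ[ℝ] E) (w : E), (∀ x i, ℓ i (π x + w) = 0) ∧
      ∀ x, (∀ i, ℓ i x = 0) → π x + w = x := by
  choose φ c hℓ using hℓ
  obtain rfl : ℓ = fun i x => φ i x + c i := funext hℓ
  set V := ⨅ i, LinearMap.ker (φ i)
  obtain ⟨W, hVW⟩ := V.exists_isCompl
  refine ⟨V.projection W hVW, x₀ - V.projection W hVW x₀, fun x i => ?_, fun x hx => ?_⟩
  · have hV : ∀ y, φ i (V.projection W hVW y) = 0 := fun y =>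
      (Submodule.mem_iInf _).1 (Submodule.projection_apply_mem hVW y) i
    simp only [map_add, map_sub, hV, zero_add, sub_zero]
    exact hx₀ i
  · have hxV : x - x₀ ∈ V := Submodule.mem_iInf _ |>.2 fun i => by
      simp only [LinearMap.mem_ker, map_sub]
      linear_combination hx i - hx₀ i
    rw [add_sub_left_comm, ← map_sub, Submodule.projection_apply_of_mem_left hVW hxV,
      add_sub_cancel]

theorem exists_nonneg_sum_mul_eq_neg {α ι : Type*} [Fintype ι] {ℓ : ι → α → ℝ}
    (h : ∀ x, ∑ i, ℓ i x = 0) (μ : ι → ℝ) :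
    ∃ κ : ι → ℝ, (∀ i, 0 ≤ κ i) ∧ ∀ x, ∑ i, κ i * ℓ i x = -∑ i, μ i * ℓ i x := by
  refine ⟨fun i => ∑ j, |μ j| - μ i, fun i => sub_nonneg.2 ((le_abs_self _).trans
    (Finset.single_le_sum (fun j _ => abs_nonneg (μ j)) (Finset.mem_univ i))), fun x => ?_⟩
  simp only [sub_mul, Finset.sum_sub_distrib, ← Finset.mul_sum, h x, mul_zero, zero_sub]

end AffineFunctions

section ConcaveQuadraticOnAffineSubspaces

variable {m : Type*} [Fintype m]

theorem IsNegSemidef.exists_critical_point {H : Matrix m m ℝ} (hH : IsNegSemidef H)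
    (β : m → ℝ) (γ : ℝ) {ι : Type*} [Fintype ι] (φ : ι → (m → ℝ) →ₗ[ℝ] ℝ) (x₀ : m → ℝ)
    (hle : ∀ v ∈ ⨅ i, LinearMap.ker (φ i), quadFun H β γ (x₀ + v) ≤ 0) :
    ∃ v ∈ ⨅ i, LinearMap.ker (φ i), ∃ μ : ι → ℝ,
      ∀ d, ((2 : ℝ) • (H *ᵥ (x₀ + v)) + β) ⬝ᵥ d = ∑ i, μ i * φ i d := by
  classical
  set V := ⨅ i, LinearMap.ker (φ i)
  let g : V →ₗ[ℝ] Module.Dual ℝ (m → ℝ) :=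
    (dotProductEquiv ℝ m).toLinearMap ∘ₗ H.mulVecLin ∘ₗ V.subtype
  let ψ := dotProductEquiv ℝ m ((2 : ℝ) • (H *ᵥ x₀) + β)
  -- `ψ` kills every `x ∈ V` with `Hx ⟂ V`: along `x₀ + ℝx` the function is affine with slope `ψ x`
  have hker : ⨅ k, LinearMap.ker (Sum.elim φ g k) ≤ LinearMap.ker ψ := by
    intro x hx
    simp only [Submodule.mem_iInf, Sum.forall, Sum.elim_inl, Sum.elim_inr,
      LinearMap.mem_ker] at hx
    obtain ⟨hφ, hg⟩ := hx
    have hxV : x ∈ V := Submodule.mem_iInf _ |>.2 hφ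
    have hQ : x ⬝ᵥ H *ᵥ x = 0 := by
      simpa [g, dotProduct_comm] using hg ⟨x, hxV⟩
    have hline : ∀ t : ℝ, quadFun H β γ x₀ + t * ψ x ≤ 0 := fun t => by
      have := hle (t • x) (V.smul_mem t hxV)
      rwa [quadFun_add hH.1, smul_dotProduct_mulVec_smul, hQ, mul_zero, add_zero,
        dotProduct_smul, smul_eq_mul] at this
    by_contra hψ
    have := hline ((1 - quadFun H β γ x₀) / ψ x)
    rw [div_mul_cancel₀ _ hψ] at this
    linarith
  have hψ := FiniteDimensional.mem_span_of_iInf_ker_le_ker hker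
  rw [Set.Sum.elim_range, Submodule.span_union, Submodule.mem_sup] at hψ
  obtain ⟨ψ₁, hψ₁, ψ₂, hψ₂, hψ⟩ := hψ
  obtain ⟨μ, rfl⟩ := (Submodule.mem_span_range_iff_exists_fun ℝ).1 hψ₁
  rw [← LinearMap.coe_range, Submodule.span_eq] at hψ₂
  obtain ⟨u, rfl⟩ := hψ₂
  refine ⟨-(1 / 2 : ℝ) • (u : m → ℝ), V.smul_mem _ u.2, μ, fun d => ?_⟩
  have := LinearMap.congr_fun hψ d
  simp only [g, ψ, LinearMap.coe_comp, LinearEquiv.coe_coe, Submodule.coe_subtype,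
    Function.comp_apply, mulVecBilin_apply, LinearMap.add_apply, LinearMap.coe_sum,
    LinearMap.coe_smul, Finset.sum_apply, Pi.smul_apply, smul_eq_mul, dotProductEquiv_apply_apply,
    map_add, map_smul, LinearMap.smul_apply] at this
  rw [mulVec_add, mulVec_smul, smul_add, add_right_comm, add_dotProduct, add_dotProduct,
    smul_dotProduct, smul_dotProduct, smul_dotProduct, smul_eq_mul, smul_eq_mul, smul_eq_mul]
  linarith

theorem IsCQFun.exists_le_sum_mul_of_nonpos_on {F : (m → ℝ) → ℝ} (hF : IsCQFun F) {ι : Type*}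
    [Fintype ι] {ℓ : ι → (m → ℝ) → ℝ} (hℓ : ∀ i, IsAffineFun (ℓ i)) {x₀ : m → ℝ}
    (hx₀ : ∀ i, ℓ i x₀ = 0) (hle : ∀ x, (∀ i, ℓ i x = 0) → F x ≤ 0) :
    ∃ μ : ι → ℝ, ∀ x, F x ≤ ∑ i, μ i * ℓ i x := by
  choose φ c hℓ using hℓ
  obtain rfl : ℓ = fun i x => φ i x + c i := funext hℓ
  obtain ⟨A, b, c', hA, rfl⟩ := hF
  have hL : ∀ v ∈ ⨅ i, LinearMap.ker (φ i), ∀ i, φ i (x₀ + v) + c i = 0 := fun v hv i => by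
    rw [map_add, (Submodule.mem_iInf _).1 hv i, add_zero]
    exact hx₀ i
  obtain ⟨v, hv, μ, hμ⟩ := hA.exists_critical_point b c' φ x₀ fun v hv => hle _ (hL v hv)
  refine ⟨μ, fun x => ?_⟩
  -- expand around the critical point `x₀ + v` of the restriction to the affine subspace
  have hx := quadFun_add hA.1 b c' (x₀ + v) (x - (x₀ + v))
  rw [add_sub_cancel, hμ] at hx
  have hsum : ∑ i, μ i * φ i (x - (x₀ + v)) = ∑ i, μ i * (φ i x + c i) :=
    Finset.sum_congr rfl fun i _ => by rw [map_sub]; linear_combination -μ i * hL v hv i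
  rw [hx, hsum]
  linarith [hle _ (hL v hv), hA.2 (x - (x₀ + v))]

theorem isAffineFun_mul_of_sum_eq_zero {ι : Type*} [Fintype ι] {F : ι → (m → ℝ) → ℝ}
    (hF : ∀ i, IsCQFun (F i)) {w : ι → ℝ} (hw : ∀ i, 0 ≤ w i)
    (h : ∀ x, ∑ i, w i * F i x = 0) (i : ι) : IsAffineFun fun x => w i * F i x := by
  choose A b c hA hF using hF
  -- the quadratic part of `F j` is `(F j x + F j (-x)) / 2 - F j 0`
  have hQ : ∀ x, ∑ j, w j * (x ⬝ᵥ A j *ᵥ x) = 0 := fun x => by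
    have hj : ∀ j, w j * (x ⬝ᵥ A j *ᵥ x)
        = (w j * F j x + w j * F j (-x)) / 2 - w j * F j 0 := fun j => by
      simp only [hF, quadFun, mulVec_neg, dotProduct_neg, neg_dotProduct, mulVec_zero,
        dotProduct_zero]
      ring
    simp only [hj, Finset.sum_sub_distrib, ← Finset.sum_div, Finset.sum_add_distrib, h]
    norm_num
  have hi : ∀ x, w i * (x ⬝ᵥ A i *ᵥ x) = 0 := fun x =>
    (Finset.sum_eq_zero_iff_of_nonpos fun j _ =>
      mul_nonpos_of_nonneg_of_nonpos (hw j) ((hA j).2 x)).1 (hQ x) i (Finset.mem_univ i)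
  refine ⟨w i • dotProductBilin ℝ ℝ (b i), w i * c i, funext fun x => ?_⟩
  simp only [hF, quadFun, LinearMap.smul_apply, dotProductBilin_apply_apply, smul_eq_mul]
  linear_combination hi x

end ConcaveQuadraticOnAffineSubspaces

section Certificates

variable {E : Type*} {ι κ : Type*} [Fintype ι] [Fintype κ]

/-- NSOSC stated on the functions `fᵢ`: for quadratic polynomials, `-(∑ δᵢ fᵢ)` is SOS exactly
when `∑ δᵢ fᵢ ≤ 0` everywhere. -/
def SatisfiesNSOSC (F : ι → E → ℝ) : Prop :=
  ∀ δ : ι → ℝ, (∀ i, 0 ≤ δ i) → (∀ x, ∑ i, δ i * F i x ≤ 0) → ∀ x, ∑ i, δ i * F i x = 0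

structure IsInfeasibilityCertificate (F : ι → E → ℝ) (G : κ → E → ℝ) (lam : ι → ℝ) (η₀ : ℝ)
    (η : κ → ℝ) : Prop where
  lam_nonneg : ∀ i, 0 ≤ lam i
  η₀_nonneg : 0 ≤ η₀
  η_nonneg : ∀ j, 0 ≤ η j
  sum_eq_one : η₀ + ∑ j, η j = 1
  le_zero : ∀ x, ∑ i, lam i * F i x + ∑ j, η j * G j x + η₀ ≤ 0

theorem isInfeasibilityCertificate_div_sum {F : ι → E → ℝ} {G : κ → E → ℝ} {lam : ι → ℝ}
    {η : κ → ℝ} (hlam : ∀ i, 0 ≤ lam i) (hη : ∀ j, 0 ≤ η j) (hpos : 0 < ∑ j, η j)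
    (h : ∀ x, ∑ i, lam i * F i x + ∑ j, η j * G j x ≤ 0) :
    IsInfeasibilityCertificate F G (fun i => lam i / ∑ j, η j) 0 (fun j => η j / ∑ j, η j) where
  lam_nonneg i := div_nonneg (hlam i) hpos.le
  η₀_nonneg := le_rfl
  η_nonneg j := div_nonneg (hη j) hpos.le
  sum_eq_one := by rw [zero_add, ← Finset.sum_div, div_self hpos.ne']
  le_zero x := by
    simp only [div_mul_eq_mul_div, ← Finset.sum_div, add_zero, ← add_div]
    exact div_nonpos_of_nonpos_of_nonneg (h x) hpos.le

theorem exists_isInfeasibilityCertificate_of_not_exists_zero [AddCommGroup E] [Module ℝ E]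
    {F : ι → E → ℝ} (G : κ → E → ℝ) {lam : ι → ℝ} (hlam : ∀ i, 0 ≤ lam i)
    (hℓ : ∀ i, IsAffineFun fun x => lam i * F i x)
    (hsum : ∀ x, ∑ i, lam i * F i x = 0) (h : ¬ ∃ x, ∀ i, lam i * F i x = 0) :
    ∃ lam' η₀ η, IsInfeasibilityCertificate F G lam' η₀ η := by
  obtain ⟨d, hd⟩ := exists_sum_mul_eq_neg_one_of_isAffineFun hℓ h
  obtain ⟨κ, hκ, hκd⟩ := exists_nonneg_sum_mul_eq_neg hsum (-d)
  refine ⟨fun i => κ i * lam i, 1, 0, fun i => mul_nonneg (hκ i) (hlam i), zero_le_one,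
    fun _ => le_rfl, by simp, fun x => ?_⟩
  have := hκd x
  simp only [Pi.neg_apply, neg_mul, Finset.sum_neg_distrib, neg_neg, hd] at this
  simp only [mul_assoc, this, Pi.zero_apply, zero_mul, Finset.sum_const_zero]
  norm_num

end Certificates

theorem not_exists_comp_of_not_exists {E ι κ : Type*} {F : ι → E → ℝ} {G : κ → E → ℝ}
    {lam : ι → ℝ} {P : E → E} (hK : ¬ ∃ x, (∀ i, 0 ≤ F i x) ∧ ∀ j, 0 < G j x)
    (hP : ∀ x i, lam i * F i (P x) = 0) :
    ¬ ∃ x, (∀ k : {i // lam i = 0}, 0 ≤ F k (P x)) ∧ ∀ j, 0 < G j (P x) := by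
  rintro ⟨x, hFx, hGx⟩
  refine hK ⟨P x, fun i => ?_, hGx⟩
  by_cases hi : lam i = 0
  · exact hFx ⟨i, hi⟩
  · exact ((mul_eq_zero.1 (hP x i)).resolve_left hi).ge

section Reduction

variable {m : Type*} [Fintype m] {ι κ : Type*} [Fintype ι] [Fintype κ]
  {F : ι → (m → ℝ) → ℝ} {lam : ι → ℝ} {P : (m → ℝ) → m → ℝ}

/-- `P` retracts onto `L = {x | ∀ i, λᵢ Fᵢ x = 0}`, where only the `Fᵢ` with `λᵢ = 0` survive.
An inequality on `L` holds everywhere once a nonnegative multiple of the `λᵢ Fᵢ` is added: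
bound the left side by a combination of the affine `λᵢ Fᵢ`, then absorb the signs using
`∑ λᵢ Fᵢ = 0`. -/
theorem exists_lift_of_comp_nonpos (hF : ∀ i, IsCQFun (F i)) (hlam : ∀ i, 0 ≤ lam i)
    (hsum : ∀ x, ∑ i, lam i * F i x = 0) (hP : ∀ x i, lam i * F i (P x) = 0)
    (hPfix : ∀ x, (∀ i, lam i * F i x = 0) → P x = x)
    {a : {i // lam i = 0} → ℝ} (ha : ∀ k, 0 ≤ a k) {R : (m → ℝ) → ℝ} (hR : IsCQFun R)
    (h : ∀ y, ∑ k, a k * F k (P y) + R (P y) ≤ 0) :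
    ∃ δ : ι → ℝ, (∀ i, 0 ≤ δ i) ∧ (∀ x, ∑ i, δ i * F i x + R x ≤ 0) ∧
      ∀ y, ∑ i, δ i * F i (P y) = ∑ k, a k * F k (P y) := by
  classical
  have hT : IsCQFun fun x => ∑ k, a k * F k x + R x :=
    (isCQFun_sum_mul (F := fun k : {i // lam i = 0} => F k) (fun k => hF k) ha).add hR
  obtain ⟨μ, hμ⟩ := hT.exists_le_sum_mul_of_nonpos_on
    (isAffineFun_mul_of_sum_eq_zero hF hlam hsum) (hP 0) fun x hx => by
    simpa only [hPfix x hx] using h x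
  obtain ⟨κ', hκ', hκμ⟩ := exists_nonneg_sum_mul_eq_neg hsum μ
  have hsplit : ∀ x, ∑ i, ((if h : lam i = 0 then a ⟨i, h⟩ else 0) + κ' i * lam i) * F i x
      = ∑ k, a k * F k x + ∑ i, κ' i * (lam i * F i x) := fun x => by
    have h1 : ∀ k : {i // lam i = 0}, (if h : lam k = 0 then a ⟨k, h⟩ else 0) * F k x
        = a k * F k x := fun k => by rw [dif_pos k.2]
    have h2 : ∀ k : {i // lam i ≠ 0}, (if h : lam k = 0 then a ⟨k, h⟩ else 0) * F k x = 0 :=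
      fun k => by rw [dif_neg k.2, zero_mul]
    simp only [add_mul, Finset.sum_add_distrib, mul_assoc]
    rw [← Fintype.sum_subtype_add_sum_subtype fun i => lam i = 0]
    simp only [h1, h2, Finset.sum_const_zero, add_zero]
  refine ⟨fun i => (if h : lam i = 0 then a ⟨i, h⟩ else 0) + κ' i * lam i, fun i => ?_,
    fun x => ?_, fun y => ?_⟩
  · refine add_nonneg ?_ (mul_nonneg (hκ' i) (hlam i))
    split_ifs
    exacts [ha _, le_rfl]
  · rw [hsplit, hκμ]
    linarith [hμ x]
  · simp only [hsplit, hP y, mul_zero, Finset.sum_const_zero, add_zero]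

theorem satisfiesNSOSC_comp (hF : ∀ i, IsCQFun (F i)) (hlam : ∀ i, 0 ≤ lam i)
    (hsum : ∀ x, ∑ i, lam i * F i x = 0) (hP : ∀ x i, lam i * F i (P x) = 0)
    (hPfix : ∀ x, (∀ i, lam i * F i x = 0) → P x = x)
    (hN : SatisfiesNSOSC F) : SatisfiesNSOSC fun (k : {i // lam i = 0}) x => F k (P x) := by
  intro a ha hle y
  obtain ⟨δ, hδ, hδle, hδP⟩ := exists_lift_of_comp_nonpos hF hlam hsum hP hPfix ha (isCQFun_const 0)
    fun y => by simpa using hle y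
  rw [← hδP]
  exact hN δ hδ (fun x => by simpa using hδle x) (P y)

theorem exists_isInfeasibilityCertificate_of_comp (hF : ∀ i, IsCQFun (F i))
    (hlam : ∀ i, 0 ≤ lam i) (hsum : ∀ x, ∑ i, lam i * F i x = 0)
    (hP : ∀ x i, lam i * F i (P x) = 0)
    (hPfix : ∀ x, (∀ i, lam i * F i x = 0) → P x = x) {G : κ → (m → ℝ) → ℝ}
    (hG : ∀ j, IsCQFun (G j)) {lam' : {i // lam i = 0} → ℝ} {η₀ : ℝ} {η : κ → ℝ}
    (hc : IsInfeasibilityCertificate (fun (k : {i // lam i = 0}) x => F k (P x))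
      (fun j x => G j (P x)) lam' η₀ η) :
    ∃ lam'', IsInfeasibilityCertificate F G lam'' η₀ η := by
  obtain ⟨δ, hδ, hδle, -⟩ := exists_lift_of_comp_nonpos hF hlam hsum hP hPfix hc.lam_nonneg
    ((isCQFun_sum_mul hG hc.η_nonneg).add (isCQFun_const η₀)) fun y => by
      simpa only [add_assoc] using hc.le_zero y
  exact ⟨δ, hδ, hc.η₀_nonneg, hc.η_nonneg, hc.sum_eq_one, fun x => by
    simpa only [add_assoc] using hδle x⟩

end Reduction

theorem exists_isInfeasibilityCertificate {m : Type*} [Fintype m] {ι κ : Type*} [Fintype ι]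
    [Fintype κ] {F : ι → (m → ℝ) → ℝ} {G : κ → (m → ℝ) → ℝ} (hF : ∀ i, IsCQFun (F i))
    (hG : ∀ j, IsCQFun (G j)) (hK : ¬ ∃ x, (∀ i, 0 ≤ F i x) ∧ ∀ j, 0 < G j x)
    (hN : SatisfiesNSOSC F) : ∃ lam η₀ η, IsInfeasibilityCertificate F G lam η₀ η := by
  induction hr : Fintype.card ι using Nat.strong_induction_on generalizing ι F G with
  | _ r IH =>
    obtain ⟨w, hw, hw0, hwle⟩ := exists_nonneg_sum_mul_nonpos_of_concaveOn (Φ := Sum.elim F G)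
      (Sum.forall.2 ⟨fun i => (hF i).concaveOn, fun j => (hG j).concaveOn⟩)
      fun ⟨x, hx⟩ => hK ⟨x, fun i => (hx (.inl i)).le, fun j => hx (.inr j)⟩
    obtain ⟨lam, η, rfl⟩ : ∃ lam η, w = Sum.elim lam η :=
      ⟨_, _, (Sum.elim_comp_inl_inr w).symm⟩
    simp only [Fintype.sum_sum_type, Sum.elim_inl, Sum.elim_inr] at hwle
    have hlam : ∀ i, 0 ≤ lam i := fun i => hw (.inl i)
    have hη : ∀ j, 0 ≤ η j := fun j => hw (.inr j)
    by_cases hηpos : 0 < ∑ j, η j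
    · exact ⟨_, _, _, isInfeasibilityCertificate_div_sum hlam hη hηpos hwle⟩
    obtain rfl : η = 0 := funext fun j => (Finset.sum_eq_zero_iff_of_nonneg fun j _ => hη j).1
      (le_antisymm (not_lt.1 hηpos) (Finset.sum_nonneg fun j _ => hη j)) j (Finset.mem_univ j)
    have hsum : ∀ x, ∑ i, lam i * F i x = 0 := hN lam hlam fun x => by simpa using hwle x
    have hℓ := isAffineFun_mul_of_sum_eq_zero hF hlam hsum
    by_cases hL : ∃ x₀, ∀ i, lam i * F i x₀ = 0
    · -- recurse on the `Fᵢ` with `λᵢ = 0`, restricted to `L = {x | ∀ i, λᵢ Fᵢ x = 0}`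
      obtain ⟨x₀, hx₀⟩ := hL
      obtain ⟨π, v, hP, hPfix⟩ := exists_affine_retraction hℓ hx₀
      have hlt : Fintype.card {i // lam i = 0} < r := by
        obtain ⟨i, hi⟩ : ∃ i, lam i ≠ 0 := by
          by_contra! h
          exact hw0 (by rw [show lam = 0 from funext h, Sum.elim_zero_zero])
        exact hr ▸ Fintype.card_subtype_lt hi
      obtain ⟨lam', η₀, η', hc⟩ := IH _ hlt (F := fun (k : {i // lam i = 0}) x => F k (π x + v))
        (fun k => (hF k).comp_affine π v) (fun j => (hG j).comp_affine π v)
        (not_exists_comp_of_not_exists hK hP)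
        (satisfiesNSOSC_comp hF hlam hsum hP hPfix hN) rfl
      obtain ⟨lam'', hc''⟩ := exists_isInfeasibilityCertificate_of_comp hF hlam hsum hP hPfix hG hc
      exact ⟨lam'', η₀, η', hc''⟩
    · exact exists_isInfeasibilityCertificate_of_not_exists_zero G hlam hℓ hsum hL

theorem satisfiesNSOSC_eval {m ι : Type*} [Fintype m] [Fintype ι] {f : ι → MvPolynomial m ℝ}
    (hf : ∀ i, IsCQ (f i))
    (h : ¬ ∃ δ : ι → ℝ, (∀ i, 0 ≤ δ i) ∧ IsSOS (-(∑ i, C (δ i) * f i)) ∧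
      (∑ i, C (δ i) * f i) ≠ 0) :
    SatisfiesNSOSC fun i x => eval x (f i) := by
  intro δ hδ hle x
  have heval : ∀ x, eval x (∑ i, C (δ i) * f i) = ∑ i, δ i * eval x (f i) := fun x => by simp
  have hzero : ∑ i, C (δ i) * f i = 0 := by
    by_contra hne
    refine h ⟨δ, hδ, (isSOS_and_totalDegree_le_of_nonneg ?_ fun x => ?_).1, hne⟩
    · simpa [heval] using isCQFun_sum_mul (fun i => (hf i).isCQFun_eval) hδ
    · simpa [heval] using hle x
  simpa [heval] using congrArg (eval x) hzero

/-- Generalization of Motzkin's theorem to concave quadratic inequalities: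
if `K = {x : fᵢ(x) ≥ 0, gⱼ(x) > 0}` is empty and the `fᵢ` satisfy NSOSC, then
there are `λᵢ ≥ 0`, `η₀, ηⱼ ≥ 0` and an SOS polynomial `h` of degree `≤ 2`
with `∑ᵢ λᵢ fᵢ + ∑ⱼ ηⱼ gⱼ + η₀ + h ≡ 0` and `η₀ + ∑ⱼ ηⱼ = 1`. -/
theorem cq_motzkin_generalization (n r s : ℕ)
    (f : Fin r → MvPolynomial (Fin n) ℝ) (g : Fin s → MvPolynomial (Fin n) ℝ)
    (hf : ∀ i, IsCQ (f i)) (hg : ∀ j, IsCQ (g j))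
    (hK : ¬ ∃ x : Fin n → ℝ,
      (∀ i, 0 ≤ MvPolynomial.eval x (f i)) ∧ (∀ j, 0 < MvPolynomial.eval x (g j)))
    (hnsosc : ¬ ∃ δ : Fin r → ℝ, (∀ i, 0 ≤ δ i) ∧
      IsSOS (-(∑ i, MvPolynomial.C (δ i) * f i)) ∧
      (∑ i, MvPolynomial.C (δ i) * f i) ≠ 0) :
    ∃ (lam : Fin r → ℝ) (η₀ : ℝ) (η : Fin s → ℝ) (h : MvPolynomial (Fin n) ℝ),
      (∀ i, 0 ≤ lam i) ∧ 0 ≤ η₀ ∧ (∀ j, 0 ≤ η j) ∧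
      IsSOS h ∧ h.totalDegree ≤ 2 ∧
      (∑ i, MvPolynomial.C (lam i) * f i) + (∑ j, MvPolynomial.C (η j) * g j)
        + MvPolynomial.C η₀ + h = 0 ∧
      η₀ + ∑ j, η j = 1 := by
  obtain ⟨lam, η₀, η, hc⟩ := exists_isInfeasibilityCertificate
    (fun i => (hf i).isCQFun_eval) (fun j => (hg j).isCQFun_eval) hK (satisfiesNSOSC_eval hf hnsosc)
  set p := (∑ i, C (lam i) * f i) + (∑ j, C (η j) * g j) + C η₀
  have heval : ∀ x, eval x p = ∑ i, lam i * eval x (f i) + ∑ j, η j * eval x (g j) + η₀ :=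
    fun x => by simp [p]
  have hp : IsCQFun fun x => eval x p := by
    simpa only [heval] using ((isCQFun_sum_mul (fun i => (hf i).isCQFun_eval) hc.lam_nonneg).add
      (isCQFun_sum_mul (fun j => (hg j).isCQFun_eval) hc.η_nonneg)).add (isCQFun_const η₀)
  obtain ⟨hsos, hdeg⟩ := isSOS_and_totalDegree_le_of_nonneg (p := -p) (by simpa using hp)
    fun x => by rw [map_neg, heval]; linarith [hc.le_zero x]
  exact ⟨lam, η₀, η, -p, hc.lam_nonneg, hc.η₀_nonneg, hc.η_nonneg, hsos, hdeg, add_neg_cancel p,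
    hc.sum_eq_one⟩
end

section
/- Let h(x,y,z) ∈ ℝ[x,y,z] be a polynomial of degree at most 2 in the variables x = (x₁,…,x_d), y = (y₁,…,y_u), z = (z₁,…,z_v) that is a sum of squares, and suppose that for every i ∈ {1,…,u} and j ∈ {1,…,v} the coefficient of the monomial y_i z_j in h is zero. Then there exist polynomials h₁ ∈ ℝ[x,y] and h₂ ∈ ℝ[x,z], each of degree at most 2 and each a sum of squares, such that h = h₁ + h₂. -/
/-!
Write `h = ∑ₗ qₗ²`. Every `qₗ` is affine: the top homogeneous components of the `qₗ²` are squares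
and cannot cancel over `ℝ`. Collect the coefficients of `yᵢ` and of `zⱼ` in the `qₗ` into vectors
`bᵢ, cⱼ ∈ ℝᵏ`; the coefficient of `yᵢ zⱼ` in `h` is `2 ⟪bᵢ, cⱼ⟫`, so every `bᵢ` is orthogonal to
every `cⱼ`. If `P` is the orthogonal projection onto the span of the `cⱼ`, then
`|q|² = |P q|² + |(1 - P) q|²`; the entries of `(1 - P) q` are free of `z` because `(1 - P) cⱼ = 0`,
and those of `P q` are free of `y` because `P bᵢ = 0`.
-/

open MvPolynomial

namespace Matrix

variable {R n : Type*} [CommRing R] [Fintype n]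

theorem mulVec_dotProduct_mulVec_self_of_isIdempotentElem {P : Matrix n n R} (hPt : Pᵀ = P)
    (hP : IsIdempotentElem P) (v : n → R) : P *ᵥ v ⬝ᵥ P *ᵥ v = P *ᵥ v ⬝ᵥ v := by
  rw [dotProduct_mulVec, ← mulVec_transpose, hPt, mulVec_mulVec, hP.eq]

theorem dotProduct_self_eq_add_of_isIdempotentElem [DecidableEq n] {P : Matrix n n R}
    (hPt : Pᵀ = P) (hP : IsIdempotentElem P) (v : n → R) :
    v ⬝ᵥ v = P *ᵥ v ⬝ᵥ P *ᵥ v + (1 - P) *ᵥ v ⬝ᵥ (1 - P) *ᵥ v := by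
  have h1P : (1 - P)ᵀ = 1 - P := by rw [transpose_sub, transpose_one, hPt]
  rw [mulVec_dotProduct_mulVec_self_of_isIdempotentElem hPt hP,
    mulVec_dotProduct_mulVec_self_of_isIdempotentElem h1P hP.one_sub, ← add_dotProduct,
    ← add_mulVec, add_sub_cancel, one_mulVec]

theorem exists_isStarProjection_mulVec {ι : Type*} [DecidableEq n] (c : ι → n → ℝ) :
    ∃ P : Matrix n n ℝ, IsStarProjection P ∧ (∀ j, P *ᵥ c j = c j) ∧
      ∀ x, (∀ j, x ⬝ᵥ c j = 0) → P *ᵥ x = 0 := by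
  let W := Submodule.span ℝ (Set.range fun j => WithLp.toLp 2 (c j))
  let P := (toEuclideanCLM (𝕜 := ℝ) (n := n)).symm W.starProjection
  have hP : ∀ x, P *ᵥ x = WithLp.ofLp (W.starProjection (WithLp.toLp 2 x)) := fun x => by
    rw [← ofLp_toEuclideanCLM, StarAlgEquiv.apply_symm_apply]
  have hW := isStarProjection_starProjection (U := W)
  refine ⟨P, ⟨?_, ?_⟩, fun j => ?_, fun x hx => ?_⟩
  · simp only [IsIdempotentElem, P, ← map_mul, hW.isIdempotentElem.eq]
  · simp only [IsSelfAdjoint, P, ← StarRingEquivClass.map_star, hW.isSelfAdjoint.star_eq]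
  · rw [hP, Submodule.starProjection_eq_self_iff.mpr (Submodule.subset_span (Set.mem_range_self j))]
  · have hxW : Submodule.span ℝ {WithLp.toLp 2 x} ⟂ W := by
      refine Submodule.isOrtho_span.mpr ?_
      rintro _ rfl _ ⟨j, rfl⟩
      simpa [EuclideanSpace.inner_toLp_toLp, dotProduct_comm] using hx j
    rw [hP, W.starProjection_apply_eq_zero_iff.mpr
      (Submodule.isOrtho_iff_le.mp hxW (Submodule.mem_span_singleton_self _)), WithLp.ofLp_zero]

end Matrix

theorem Finsupp.exists_eq_single_of_degree_eq_one {σ : Type*} {m : σ →₀ ℕ} (h : m.degree = 1) :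
    ∃ w, m = single w 1 := by
  obtain ⟨w, hw⟩ : ∃ w, m w ≠ 0 := by
    by_contra! h0
    simp [show m = 0 from Finsupp.ext h0] at h
  obtain ⟨m', rfl⟩ := exists_add_of_le (single_le_iff.mpr (Nat.one_le_iff_ne_zero.mpr hw))
  rw [map_add, degree_single, add_eq_left, degree_eq_zero_iff] at h
  exact ⟨w, by rw [h, add_zero]⟩

namespace MvPolynomial

open Finsupp (single)

variable {σ ι R : Type*}

section CommSemiring

variable [CommSemiring R]

theorem homogeneousComponent_add_mul {p q : MvPolynomial σ R} {m n : ℕ} (hp : p.totalDegree ≤ m)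
    (hq : q.totalDegree ≤ n) :
    homogeneousComponent (m + n) (p * q) = homogeneousComponent m p * homogeneousComponent n q := by
  classical
  ext d
  rw [coeff_homogeneousComponent, coeff_mul, coeff_mul]
  split_ifs with hd
  · refine Finset.sum_congr rfl fun ⟨a, b⟩ hab => ?_
    rw [Finset.HasAntidiagonal.mem_antidiagonal] at hab
    have hab' : a.degree + b.degree = m + n := by rw [← map_add, hab, hd]
    simp only [coeff_homogeneousComponent]
    rcases lt_trichotomy a.degree m with ha | ha | ha
    · rw [coeff_eq_zero_of_totalDegree_lt (hq.trans_lt (by omega : n < b.degree))]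
      simp
    · simp [ha, show b.degree = n by omega]
    · rw [coeff_eq_zero_of_totalDegree_lt (hp.trans_lt ha)]
      simp
  · refine (Finset.sum_eq_zero fun ⟨a, b⟩ hab => ?_).symm
    rw [Finset.HasAntidiagonal.mem_antidiagonal] at hab
    simp only [coeff_homogeneousComponent]
    split_ifs with ha hb
    · exact absurd (by rw [← hab, map_add, ha, hb]) hd
    all_goals simp

theorem homogeneousComponent_totalDegree_ne_zero {p : MvPolynomial σ R} (hp : p ≠ 0) :
    homogeneousComponent p.totalDegree p ≠ 0 := by
  obtain ⟨d, hd, hdeg⟩ := Finset.exists_mem_eq_sup p.support (support_nonempty.mpr hp)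
    fun d => d.sum fun _ e => e
  refine ne_of_apply_ne (coeff d) ?_
  rw [coeff_homogeneousComponent, if_pos (by rw [totalDegree, hdeg]; rfl), coeff_zero]
  exact mem_support_iff.mp hd

end CommSemiring

section Real

theorem sum_sq_eq_zero_iff [Fintype ι] {q : ι → MvPolynomial σ ℝ} :
    ∑ i, q i ^ 2 = 0 ↔ ∀ i, q i = 0 := by
  refine ⟨fun h i => MvPolynomial.funext fun x => ?_, fun h => by simp [h]⟩
  have hx := congrArg (eval x) h
  simp only [map_sum, map_pow, map_zero] at hx
  simpa using (Finset.sum_eq_zero_iff_of_nonneg fun j _ => sq_nonneg _).mp hx i (Finset.mem_univ i)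

theorem totalDegree_le_of_totalDegree_sum_sq_le [Fintype ι] {q : ι → MvPolynomial σ ℝ} {n : ℕ}
    (h : (∑ i, q i ^ 2).totalDegree ≤ 2 * n) (i : ι) : (q i).totalDegree ≤ n := by
  classical
  set D := Finset.univ.sup fun j => (q j).totalDegree
  have hqD : ∀ j, (q j).totalDegree ≤ D := fun j =>
    Finset.le_sup (f := fun j => (q j).totalDegree) (Finset.mem_univ j)
  by_contra! hi
  obtain ⟨j, -, hj⟩ := Finset.exists_mem_eq_sup Finset.univ ⟨i, Finset.mem_univ i⟩
    fun j => (q j).totalDegree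
  have htop : ∑ j, homogeneousComponent D (q j) ^ 2 = 0 := by
    have h0 : homogeneousComponent (D + D) (∑ j, q j ^ 2) = 0 :=
      homogeneousComponent_eq_zero _ _ (by have := hqD i; omega)
    simpa only [map_sum, sq, homogeneousComponent_add_mul (hqD _) (hqD _)] using h0
  have hqj : q j ≠ 0 := by
    rintro h0
    rw [h0, totalDegree_zero] at hj
    have := hqD i
    omega
  exact homogeneousComponent_totalDegree_ne_zero hqj (hj ▸ sum_sq_eq_zero_iff.mp htop j)

end Real

section Affine

variable [CommSemiring R]

theorem coeff_single_add_single_mul {p q : MvPolynomial σ R} (hp : p.totalDegree ≤ 1)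
    (hq : q.totalDegree ≤ 1) {w₁ w₂ : σ} (hw : w₁ ≠ w₂) :
    coeff (single w₁ 1 + single w₂ 1) (p * q) =
      coeff (single w₁ 1) p * coeff (single w₂ 1) q +
        coeff (single w₂ 1) p * coeff (single w₁ 1) q := by
  classical
  have hne : single w₁ 1 ≠ single w₂ 1 := (Finsupp.single_left_injective one_ne_zero).ne hw
  rw [coeff_mul, Finset.sum_eq_add_of_mem (single w₁ 1, single w₂ 1) (single w₂ 1, single w₁ 1)
    (by simp) (by simp [add_comm]) (by simp [hne]) ?_]
  rintro ⟨a, b⟩ hab ⟨hne₁, hne₂⟩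
  rw [Finset.HasAntidiagonal.mem_antidiagonal] at hab
  by_contra h0
  have hda : a.degree ≤ 1 :=
    (le_totalDegree (mem_support_iff.mpr (left_ne_zero_of_mul h0))).trans hp
  have hdb : b.degree ≤ 1 :=
    (le_totalDegree (mem_support_iff.mpr (right_ne_zero_of_mul h0))).trans hq
  have hdab : a.degree + b.degree = 2 := by
    rw [← map_add, hab, map_add, Finsupp.degree_single, Finsupp.degree_single]
  obtain ⟨t₁, rfl⟩ := Finsupp.exists_eq_single_of_degree_eq_one (by omega : a.degree = 1)
  obtain ⟨t₂, rfl⟩ := Finsupp.exists_eq_single_of_degree_eq_one (by omega : b.degree = 1)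
  rcases (Finsupp.single_add_single_eq_single_add_single one_ne_zero one_ne_zero).mp hab with
    ⟨rfl, rfl⟩ | ⟨-, rfl, rfl⟩ | ⟨h2, -⟩
  · exact hne₁ rfl
  · exact hne₂ rfl
  · omega

theorem notMem_vars_of_totalDegree_le_one {p : MvPolynomial σ R} (hp : p.totalDegree ≤ 1)
    {w : σ} (hw : coeff (single w 1) p = 0) : w ∉ p.vars := by
  rw [mem_vars_iff_mem_support]
  rintro ⟨m, hm, hwm⟩
  have hm0 : m ≠ 0 := by
    rintro rfl
    simp at hwm
  have hdeg : m.degree ≤ 1 := (le_totalDegree hm).trans hp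
  obtain ⟨t, rfl⟩ := Finsupp.exists_eq_single_of_degree_eq_one
    (le_antisymm hdeg (Nat.one_le_iff_ne_zero.mpr ((Finsupp.degree_eq_zero_iff m).not.mpr hm0)))
  rw [Finsupp.support_single _ one_ne_zero, Finset.mem_singleton] at hwm
  subst hwm
  exact mem_support_iff.mp hm hw

variable [Fintype ι]

theorem coeff_single_add_single_sum_sq {q : ι → MvPolynomial σ R} (hq : ∀ i, (q i).totalDegree ≤ 1)
    {w₁ w₂ : σ} (hw : w₁ ≠ w₂) :
    coeff (single w₁ 1 + single w₂ 1) (∑ i, q i ^ 2) =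
      2 * ((fun i => coeff (single w₁ 1) (q i)) ⬝ᵥ fun i => coeff (single w₂ 1) (q i)) := by
  simp only [coeff_sum, sq, coeff_single_add_single_mul (hq _) (hq _) hw, dotProduct,
    Finset.mul_sum]
  exact Finset.sum_congr rfl fun i _ => by ring

theorem notMem_vars_sum_sq {q : ι → MvPolynomial σ R} (hq : ∀ i, (q i).totalDegree ≤ 1) {w : σ}
    (hw : ∀ i, coeff (single w 1) (q i) = 0) : w ∉ (∑ i, q i ^ 2).vars := by
  classical
  intro h
  obtain ⟨i, -, hi⟩ := Finset.mem_biUnion.mp (vars_sum_subset _ _ h)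
  exact notMem_vars_of_totalDegree_le_one (hq i) (hw i) (vars_pow _ _ hi)

theorem totalDegree_sum_sq_le {q : ι → MvPolynomial σ R} {n : ℕ}
    (hq : ∀ i, (q i).totalDegree ≤ n) : (∑ i, q i ^ 2).totalDegree ≤ 2 * n :=
  totalDegree_finsetSum_le fun i _ => (totalDegree_pow _ _).trans (Nat.mul_le_mul_left 2 (hq i))

end Affine

section MatrixAction

open Matrix

variable [Fintype ι]

theorem coeff_mulVec_map_C [CommSemiring R] {κ : Type*} (A : Matrix κ ι R)
    (q : ι → MvPolynomial σ R) (m : σ →₀ ℕ) (i : κ) :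
    coeff m ((A.map C *ᵥ q) i) = (A *ᵥ fun j => coeff m (q j)) i := by
  simp [mulVec, dotProduct, coeff_sum, coeff_C_mul]

theorem totalDegree_mulVec_map_C_le [CommSemiring R] {κ : Type*} (A : Matrix κ ι R)
    {q : ι → MvPolynomial σ R} {n : ℕ} (hq : ∀ j, (q j).totalDegree ≤ n) (i : κ) :
    ((A.map C *ᵥ q) i).totalDegree ≤ n :=
  totalDegree_finsetSum_le fun j _ => (totalDegree_mul _ _).trans <| by
    simp only [Matrix.map_apply, totalDegree_C, zero_add]
    exact hq j

theorem sum_sq_eq_sum_sq_mulVec_add [DecidableEq ι] [CommRing R] [StarRing R] [TrivialStar R]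
    {P : Matrix ι ι R} (hP : IsStarProjection P) (q : ι → MvPolynomial σ R) :
    ∑ i, q i ^ 2 = ∑ i, (P.map C *ᵥ q) i ^ 2 + ∑ i, ((1 - P).map C *ᵥ q) i ^ 2 := by
  have hsum (v : ι → MvPolynomial σ R) : ∑ i, v i ^ 2 = v ⬝ᵥ v := by simp [dotProduct, sq]
  have hPt : (P.map (C : R → MvPolynomial σ R))ᵀ = P.map C := by
    rw [← transpose_map, ← conjTranspose_eq_transpose_of_trivial, ← star_eq_conjTranspose,
      hP.isSelfAdjoint.star_eq]
  have hPi : IsIdempotentElem (P.map (C : R → MvPolynomial σ R)) :=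
    hP.isIdempotentElem.map (C : R →+* MvPolynomial σ R).mapMatrix
  have h1P : (1 - P).map C = 1 - P.map (C : R → MvPolynomial σ R) := by
    rw [Matrix.map_sub _ (map_sub C), Matrix.map_one _ C_0 C_1]
  rw [hsum, hsum, hsum, h1P]
  exact dotProduct_self_eq_add_of_isIdempotentElem hPt hPi q

end MatrixAction

end MvPolynomial

/-- Splitting lemma: a quadratic SOS polynomial `h(x,y,z)` with no mixed
`yᵢ zⱼ` monomials is a sum `h = h₁ + h₂` of a quadratic SOS polynomial
`h₁ ∈ ℝ[x,y]` and a quadratic SOS polynomial `h₂ ∈ ℝ[x,z]`. -/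
theorem sos_split (d u v : ℕ)
    (h : MvPolynomial (Fin d ⊕ Fin u ⊕ Fin v) ℝ)
    (hdeg : h.totalDegree ≤ 2) (hsos : IsSOS h)
    (hmixed : ∀ (i : Fin u) (j : Fin v),
      MvPolynomial.coeff
        (Finsupp.single (Sum.inr (Sum.inl i)) 1 + Finsupp.single (Sum.inr (Sum.inr j)) 1)
        h = 0) :
    ∃ h₁ h₂ : MvPolynomial (Fin d ⊕ Fin u ⊕ Fin v) ℝ,
      (∀ w ∈ h₁.vars, ∀ j : Fin v, w ≠ Sum.inr (Sum.inr j)) ∧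
      (∀ w ∈ h₂.vars, ∀ i : Fin u, w ≠ Sum.inr (Sum.inl i)) ∧
      h₁.totalDegree ≤ 2 ∧ h₂.totalDegree ≤ 2 ∧
      IsSOS h₁ ∧ IsSOS h₂ ∧ h = h₁ + h₂ := by
  obtain ⟨k, q, rfl⟩ := hsos
  have hq : ∀ l, (q l).totalDegree ≤ 1 := totalDegree_le_of_totalDegree_sum_sq_le hdeg
  let yCoeff (i : Fin u) (l : Fin k) : ℝ := coeff (Finsupp.single (Sum.inr (Sum.inl i)) 1) (q l)
  let zCoeff (j : Fin v) (l : Fin k) : ℝ := coeff (Finsupp.single (Sum.inr (Sum.inr j)) 1) (q l)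
  have hyz (i : Fin u) (j : Fin v) : yCoeff i ⬝ᵥ zCoeff j = 0 := by
    simpa [coeff_single_add_single_sum_sq hq] using hmixed i j
  obtain ⟨P, hP, hPz, hPy⟩ := Matrix.exists_isStarProjection_mulVec zCoeff
  have hr := totalDegree_mulVec_map_C_le (1 - P) hq
  have hs := totalDegree_mulVec_map_C_le P hq
  refine ⟨_, _, ?_, ?_, totalDegree_sum_sq_le hr, totalDegree_sum_sq_le hs, ⟨k, _, rfl⟩,
    ⟨k, _, rfl⟩, (sum_sq_eq_sum_sq_mulVec_add hP q).trans (add_comm _ _)⟩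
  · rintro w hw j rfl
    refine notMem_vars_sum_sq hr (fun l => ?_) hw
    rw [coeff_mulVec_map_C, Matrix.sub_mulVec, Matrix.one_mulVec, hPz j, sub_self, Pi.zero_apply]
  · rintro w hw i rfl
    refine notMem_vars_sum_sq hs (fun l => ?_) hw
    rw [coeff_mulVec_map_C, hPy _ (hyz i), Pi.zero_apply]
end

section
/- Let φ and ψ be predicates on ℝ^{d+u+v} with φ ∧ ψ unsatisfiable, depending respectively only on (x,y) and on (x,z), and let f ∈ ℝ[x] be a polynomial in the common variables such that every point satisfying φ satisfies f ≥ 0 and every point satisfying ψ satisfies f ≤ 0. Set φ₂ = (f = 0 ∧ φ) and ψ₂ = (f = 0 ∧ ψ). If I₂₂ is a predicate on the common variables x such that φ₂ entails I₂₂ and I₂₂ ∧ ψ₂ is unsatisfiable, then I := (f > 0) ∨ (f ≥ 0 ∧ I₂₂) satisfies: φ entails I, and I ∧ ψ is unsatisfiable; hence I is a (reverse) interpolant for φ and ψ. -/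
open MvPolynomial

/-- If `φ(x,y)` and `ψ(x,z)` are mutually contradictory, `f ∈ ℝ[x]` is
nonnegative on `φ` and nonpositive on `ψ`, and `I₂₂` is a predicate on the
common variables `x` that is entailed by `φ₂ = (f = 0 ∧ φ)` and contradictory
with `ψ₂ = (f = 0 ∧ ψ)`, then `I = (f > 0) ∨ (f ≥ 0 ∧ I₂₂)` is entailed by
`φ` and contradictory with `ψ`, i.e. a reverse interpolant for `φ, ψ`. -/
theorem interpolant_from_subproblem (d u v : ℕ)
    (φ : (Fin d → ℝ) → (Fin u → ℝ) → Prop)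
    (ψ : (Fin d → ℝ) → (Fin v → ℝ) → Prop)
    (hunsat : ¬ ∃ (x : Fin d → ℝ) (y : Fin u → ℝ) (z : Fin v → ℝ), φ x y ∧ ψ x z)
    (f : MvPolynomial (Fin d) ℝ)
    (hφf : ∀ (x : Fin d → ℝ) (y : Fin u → ℝ), φ x y → 0 ≤ MvPolynomial.eval x f)
    (hψf : ∀ (x : Fin d → ℝ) (z : Fin v → ℝ), ψ x z → MvPolynomial.eval x f ≤ 0)
    (I₂₂ : (Fin d → ℝ) → Prop)
    (hI₂₂φ : ∀ (x : Fin d → ℝ) (y : Fin u → ℝ),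
      MvPolynomial.eval x f = 0 → φ x y → I₂₂ x)
    (hI₂₂ψ : ¬ ∃ (x : Fin d → ℝ) (z : Fin v → ℝ),
      I₂₂ x ∧ MvPolynomial.eval x f = 0 ∧ ψ x z) :
    (∀ (x : Fin d → ℝ) (y : Fin u → ℝ), φ x y →
      (0 < MvPolynomial.eval x f ∨ (0 ≤ MvPolynomial.eval x f ∧ I₂₂ x))) ∧
    (¬ ∃ (x : Fin d → ℝ) (z : Fin v → ℝ),
      (0 < MvPolynomial.eval x f ∨ (0 ≤ MvPolynomial.eval x f ∧ I₂₂ x)) ∧ ψ x z) := by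
  constructor
  · intro x y hφ
    rcases lt_or_eq_of_le (hφf x y hφ) with h | h
    · exact Or.inl h
    · exact Or.inr ⟨le_of_eq h, hI₂₂φ x y h.symm hφ⟩
  · rintro ⟨x, z, hI, hψ⟩
    have hle := hψf x z hψ
    rcases hI with h | ⟨h0, hI2⟩
    · exact absurd hle (not_le.mpr h)
    · exact hI₂₂ψ ⟨x, z, hI2, le_antisymm hle h0, hψ⟩
end
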